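/- arXiv:1807.07678 — 7 statements merged into one kernel-verified Lean document; each statement's English description precedes it below -/
import Mathlib

section
/- For all natural numbers a, b, the polynomial identity holds: (1+t) * Σ_{i=0}^{a} Σ_{j=0}^{b} C(a,i)·C(b,j)·C(a-i+j,j)·C(b+i-j,i)·t^{i+j} = Σ_{i=0}^{min(a,b)} C(2i,i)·C(a,i)·C(b,i)·t^i·(1+t)^{a+b+1-2i} as polynomials in t with integer coefficients. -/
/-!
Write `G(p, q) = ∑ₖ C(2k,k) C(p,k) C(q,k) t^(p+q-k)` (`centralSum`). Both sides are binomial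
transforms of `G`: the sum on the left equals `∑_{p,q} C(a,p) C(b,q) G(p,q)`, and the right-hand
side is `1 + t` times the same sum.

For the right-hand side, expand `C(a,i) (1+t)^(a-i) = ∑_p C(a,p) C(p,i) t^(p-i)` and likewise for
`b`. For the left-hand side, Vandermonde's identity gives
`C(a,m) C(a-m+n,n) = ∑_p C(a,p) C(p,m) C(n,p-m)`, which reduces the claim to
`∑_{m,n} C(p,m) C(n,p-m) C(q,n) C(m,q-n) t^(m+n) = G(p,q)`. Substituting `m = p - x`, `n = q - y`
turns the summand into `C(p,x+y) C(q,x+y) C(x+y,x) C(x+y,y) t^(p+q-(x+y))`, and summing along the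
diagonals `x + y = k` produces `∑ₓ C(k,x) C(k,k-x) = C(2k,k)`.
-/

open Polynomial Finset

theorem Finset.sum_range_eq_sum_range_of_eq_zero {M : Type*} [AddCommMonoid M] {f : ℕ → M}
    {k n : ℕ} (hkn : k ≤ n) (hf : ∀ i, k ≤ i → i < n → f i = 0) :
    ∑ i ∈ range n, f i = ∑ i ∈ range k, f i :=
  (sum_subset (range_subset_range.2 hkn) fun i hin hik =>
    hf i (by simpa using hik) (by simpa using hin)).symm

theorem Nat.add_choose_eq_sum_choose_mul_choose (k n : ℕ) :
    (k + n).choose n = ∑ u ∈ range (k + 1), k.choose u * n.choose u := by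
  rw [← Nat.choose_symm_add, Nat.add_choose_eq, ← Nat.sum_antidiagonal_swap,
    Nat.sum_antidiagonal_eq_sum_range_succ_mk]
  refine sum_congr rfl fun u hu => ?_
  rw [Prod.swap_prod_mk, Nat.choose_symm (mem_range_succ_iff.1 hu)]

theorem Nat.sum_range_choose_mul_choose_sub (k : ℕ) :
    ∑ j ∈ range (k + 1), k.choose j * k.choose (k - j) = (2 * k).choose k := by
  rw [two_mul, Nat.add_choose_eq, Nat.sum_antidiagonal_eq_sum_range_succ_mk]

section CommSemiring

variable {R : Type*} [CommSemiring R]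

theorem choose_mul_sum_range_choose_mul (a m : ℕ) (g : ℕ → R) :
    (a.choose m : R) * ∑ u ∈ range (a - m + 1), ((a - m).choose u : R) * g u
      = ∑ p ∈ range (a + 1), ((a.choose p * p.choose m : ℕ) : R) * g (p - m) := by
  rcases le_or_gt m a with hma | ham
  · rw [← sum_range_add_sum_Ico _ (by omega : m ≤ a + 1), sum_Ico_eq_sum_range,
      show a + 1 - m = a - m + 1 by omega, mul_sum]
    have hlow : ∑ p ∈ range m, ((a.choose p * p.choose m : ℕ) : R) * g (p - m) = 0 :=
      sum_eq_zero fun p hp => by simp [Nat.choose_eq_zero_of_lt (mem_range.1 hp)]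
    rw [hlow, zero_add]
    refine sum_congr rfl fun u _ => ?_
    rw [Nat.choose_mul (Nat.le_add_right m u), Nat.add_sub_cancel_left]
    push_cast
    ring
  · have hvanish : ∀ p ∈ range (a + 1), ((a.choose p * p.choose m : ℕ) : R) * g (p - m) = 0 :=
      fun p hp => by simp [Nat.choose_eq_zero_of_lt (by rw [mem_range] at hp; omega : p < m)]
    rw [sum_eq_zero hvanish, Nat.choose_eq_zero_of_lt ham, Nat.cast_zero, zero_mul]

theorem choose_mul_one_add_pow (a i : ℕ) (t : R) :
    (a.choose i : R) * (1 + t) ^ (a - i)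
      = ∑ p ∈ range (a + 1), ((a.choose p * p.choose i : ℕ) : R) * t ^ (p - i) := by
  rw [← choose_mul_sum_range_choose_mul, add_comm, add_pow]
  simp only [one_pow, mul_one, mul_comm]

theorem Nat.choose_mul_add_choose_eq_sum (a m n : ℕ) :
    a.choose m * (a - m + n).choose n
      = ∑ p ∈ range (a + 1), a.choose p * p.choose m * n.choose (p - m) := by
  simpa [Nat.add_choose_eq_sum_choose_mul_choose] using
    choose_mul_sum_range_choose_mul (R := ℕ) a m (fun u => n.choose u)

def centralSum (p q : ℕ) (t : R) : R :=
  ∑ k ∈ range (p + 1), (((2 * k).choose k * p.choose k * q.choose k : ℕ) : R) * t ^ (p + q - k)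

theorem centralSum_eq_sum_range {p q n : ℕ} (h : min p q < n) (t : R) :
    centralSum p q t
      = ∑ k ∈ range n, (((2 * k).choose k * p.choose k * q.choose k : ℕ) : R) * t ^ (p + q - k) := by
  have hvanish : ∀ k, min p q + 1 ≤ k →
      (((2 * k).choose k * p.choose k * q.choose k : ℕ) : R) * t ^ (p + q - k) = 0 := by
    intro k hk
    rcases le_total p q with hpq | hqp
    · simp [Nat.choose_eq_zero_of_lt (by omega : p < k)]
    · simp [Nat.choose_eq_zero_of_lt (by omega : q < k)]
  rw [centralSum, sum_range_eq_sum_range_of_eq_zero (by omega) fun k hk _ => hvanish k hk,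
    sum_range_eq_sum_range_of_eq_zero (by omega : min p q + 1 ≤ n) fun k hk _ => hvanish k hk]

theorem sum_sum_choose_mul_pow_eq_centralSum (p q : ℕ) (t : R) :
    ∑ m ∈ range (p + 1), ∑ n ∈ range (q + 1),
        ((p.choose m * n.choose (p - m) * (q.choose n * m.choose (q - n)) : ℕ) : R) * t ^ (m + n)
      = centralSum p q t := by
  set φ : ℕ → ℕ → R := fun x y => ((p.choose (x + y) * q.choose (x + y)
    * ((x + y).choose x * (x + y).choose y) : ℕ) : R) * t ^ (p + q - (x + y)) with hφ
  have hreflect : ∑ m ∈ range (p + 1), ∑ n ∈ range (q + 1),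
      ((p.choose m * n.choose (p - m) * (q.choose n * m.choose (q - n)) : ℕ) : R) * t ^ (m + n)
        = ∑ x ∈ range (p + 1), ∑ y ∈ range (q + 1), φ x y := by
    rw [← sum_range_reflect]
    refine sum_congr rfl fun x hx => ?_
    rw [← sum_range_reflect]
    refine sum_congr rfl fun y hy => ?_
    have hxp : x ≤ p := mem_range_succ_iff.1 hx
    have hyq : y ≤ q := mem_range_succ_iff.1 hy
    have htri : p.choose x * (p - x).choose y * (q.choose y * (q - y).choose x)
        = p.choose (x + y) * q.choose (x + y) * ((x + y).choose x * (x + y).choose y) := by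
      have hp := Nat.choose_mul (n := p) (Nat.le_add_right x y)
      have hq := Nat.choose_mul (n := q) (Nat.le_add_left y x)
      rw [Nat.add_sub_cancel_left] at hp
      rw [Nat.add_sub_cancel] at hq
      rw [← hp, ← hq]
      ring
    simp only [add_tsub_cancel_right, hφ]
    rw [Nat.sub_sub_self hxp, Nat.sub_sub_self hyq, Nat.choose_symm hxp, Nat.choose_symm hyq,
      show p - x + (q - y) = p + q - (x + y) by omega, ← htri]
    push_cast
    ring
  have htriangle : ∀ x ∈ range (p + 1),
      ∑ y ∈ range (q + 1), φ x y = ∑ y ∈ range (p + 1 - x), φ x y := by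
    intro x hx
    have hvanish : ∀ y, min (q + 1) (p + 1 - x) ≤ y → φ x y = 0 := by
      intro y hy
      rcases le_or_gt (q + 1) y with hqy | hyq
      · simp [hφ, Nat.choose_eq_zero_of_lt (by omega : q < x + y)]
      · simp [hφ, Nat.choose_eq_zero_of_lt (by omega : p < x + y)]
    rw [sum_range_eq_sum_range_of_eq_zero (min_le_left _ _) fun y hy _ => hvanish y hy,
      sum_range_eq_sum_range_of_eq_zero (min_le_right _ _) fun y hy _ => hvanish y hy]
  rw [hreflect, sum_congr rfl htriangle, ← sum_range_diag_flip, centralSum]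
  refine sum_congr rfl fun k _ => ?_
  have hk : ∀ j ∈ range (k + 1), φ j (k - j) = ((p.choose k * q.choose k : ℕ) : R)
      * t ^ (p + q - k) * ((k.choose j * k.choose (k - j) : ℕ) : R) := by
    intro j hj
    simp only [hφ, Nat.add_sub_cancel' (mem_range_succ_iff.1 hj)]
    push_cast
    ring
  rw [sum_congr rfl hk, ← mul_sum, ← Nat.cast_sum, Nat.sum_range_choose_mul_choose_sub]
  push_cast
  ring

theorem sum_choose_mul_add_choose_mul_pow (a b : ℕ) (t : R) :
    ∑ m ∈ range (a + 1), ∑ n ∈ range (b + 1),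
        ((a.choose m * b.choose n * (a - m + n).choose n * (b + m - n).choose m : ℕ) : R)
          * t ^ (m + n)
      = ∑ p ∈ range (a + 1), ∑ q ∈ range (b + 1),
          ((a.choose p * b.choose q : ℕ) : R) * centralSum p q t := by
  set T : ℕ → ℕ → ℕ → ℕ → R := fun p q m n => ((a.choose p * b.choose q
    * (p.choose m * n.choose (p - m) * (q.choose n * m.choose (q - n))) : ℕ) : R) * t ^ (m + n)
    with hT
  have hexpand : ∀ m ∈ range (a + 1), ∀ n ∈ range (b + 1),
      ((a.choose m * b.choose n * (a - m + n).choose n * (b + m - n).choose m : ℕ) : R)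
        * t ^ (m + n) = ∑ p ∈ range (a + 1), ∑ q ∈ range (b + 1), T p q m n := by
    intro m _ n hn
    rw [show a.choose m * b.choose n * (a - m + n).choose n * (b + m - n).choose m
        = a.choose m * (a - m + n).choose n * (b.choose n * (b - n + m).choose m) by
      rw [show b + m - n = b - n + m by rw [mem_range] at hn; omega]; ring,
      Nat.choose_mul_add_choose_eq_sum, Nat.choose_mul_add_choose_eq_sum, sum_mul_sum,
      Nat.cast_sum, sum_mul]
    refine sum_congr rfl fun p _ => ?_
    rw [Nat.cast_sum, sum_mul]
    refine sum_congr rfl fun q _ => ?_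
    simp only [hT]
    push_cast
    ring
  have hcentral : ∀ p ∈ range (a + 1), ∀ q ∈ range (b + 1),
      ((a.choose p * b.choose q : ℕ) : R) * centralSum p q t
        = ∑ m ∈ range (a + 1), ∑ n ∈ range (b + 1), T p q m n := by
    intro p hp q hq
    rw [← sum_sum_choose_mul_pow_eq_centralSum, mul_sum,
      sum_range_eq_sum_range_of_eq_zero (mem_range.1 hp)
        fun m hm _ => sum_eq_zero fun n _ => by simp [hT, Nat.choose_eq_zero_of_lt hm]]
    refine sum_congr rfl fun m _ => ?_
    rw [mul_sum, sum_range_eq_sum_range_of_eq_zero (mem_range.1 hq)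
        fun n hn _ => by simp [hT, Nat.choose_eq_zero_of_lt hn]]
    refine sum_congr rfl fun n _ => ?_
    simp only [hT]
    push_cast
    ring
  rw [sum_congr rfl fun m hm => sum_congr rfl (hexpand m hm),
    sum_congr rfl fun p hp => sum_congr rfl (hcentral p hp)]
  simp only [← sum_product' (s := range (a + 1)) (t := range (b + 1))]
  exact sum_comm

theorem sum_centralBinom_mul_pow_mul_one_add_pow (a b : ℕ) (t : R) :
    ∑ i ∈ range (min a b + 1),
        (((2 * i).choose i * a.choose i * b.choose i : ℕ) : R) * t ^ i
          * (1 + t) ^ (a + b + 1 - 2 * i)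
      = (1 + t) * ∑ p ∈ range (a + 1), ∑ q ∈ range (b + 1),
          ((a.choose p * b.choose q : ℕ) : R) * centralSum p q t := by
  set T : ℕ → ℕ → ℕ → R := fun i p q => ((a.choose p * b.choose q : ℕ) : R)
    * ((((2 * i).choose i * p.choose i * q.choose i : ℕ) : R) * t ^ (p + q - i)) with hT
  have hexpand : ∀ i ∈ range (min a b + 1),
      (((2 * i).choose i * a.choose i * b.choose i : ℕ) : R) * t ^ i
          * (1 + t) ^ (a + b + 1 - 2 * i)
        = (1 + t) * ∑ p ∈ range (a + 1), ∑ q ∈ range (b + 1), T i p q := by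
    intro i hi
    rw [show a + b + 1 - 2 * i = a - i + (b - i) + 1 by rw [mem_range] at hi; omega]
    calc _ = (1 + t) * (((2 * i).choose i : R) * t ^ i
          * (((a.choose i : R) * (1 + t) ^ (a - i)) * ((b.choose i : R) * (1 + t) ^ (b - i)))) := by
          push_cast
          ring
      _ = _ := by
          rw [choose_mul_one_add_pow, choose_mul_one_add_pow, sum_mul_sum]
          simp only [mul_sum]
          refine sum_congr rfl fun p _ => sum_congr rfl fun q _ => ?_
          by_cases hipq : i ≤ p ∧ i ≤ q
          · simp only [hT]
            rw [show p + q - i = i + (p - i) + (q - i) by omega]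
            push_cast
            ring
          · rcases not_and_or.1 hipq with hip | hiq
            · simp [hT, Nat.choose_eq_zero_of_lt (not_le.1 hip)]
            · simp [hT, Nat.choose_eq_zero_of_lt (not_le.1 hiq)]
  rw [sum_congr rfl hexpand, ← mul_sum, sum_comm]
  refine congrArg _ (sum_congr rfl fun p hp => ?_)
  rw [sum_comm]
  refine sum_congr rfl fun q hq => ?_
  simp only [hT]
  rw [← mul_sum, ← centralSum_eq_sum_range (by rw [mem_range] at hp hq; omega)]

end CommSemiring

theorem stmt_0 (a b : ℕ) :
    (1 + (X : Polynomial ℤ)) *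
        ∑ i ∈ Finset.range (a + 1), ∑ j ∈ Finset.range (b + 1),
          (C ((a.choose i * b.choose j * (a - i + j).choose j * (b + i - j).choose i : ℕ) : ℤ))
            * X ^ (i + j)
      = ∑ i ∈ Finset.range (min a b + 1),
          (C (((2 * i).choose i * a.choose i * b.choose i : ℕ) : ℤ)) * X ^ i
            * (1 + X) ^ (a + b + 1 - 2 * i) := by
  simp only [C_eq_natCast]
  rw [sum_choose_mul_add_choose_mul_pow, sum_centralBinom_mul_pow_mul_one_add_pow]
end

section
/- For all natural numbers a, b ≥ 1, the polynomial identity (b-a)·h_{a,b}(t) = (1+t)·(b·h_{a,b-1}(t) - a·h_{a-1,b}(t)) holds, where h_{a,b}(t) := Σ_{i=0}^{min(a,b)} C(2i,i)·C(a,i)·C(b,i)·t^i·(1+t)^{a+b+1-2i}. -/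
/-!
The recurrence holds term by term in `i`. Writing `e = a + b - 2i`, the `i`-th terms
of `h_{a,b-1}` and `h_{a-1,b}` both carry `t^i (1+t)^e`, so after multiplying by `1 + t`
all three sides carry `t^i (1+t)^(e+1)`, and the identity reduces to one for the
coefficients. That one follows from `n C(n-1,i) = (n-i) C(n,i)` for `n = a, b`: the right
side becomes `C(2i,i) C(a,i) C(b,i) ((b-i) - (a-i))`.
-/

open Polynomial Finset

/-- The `h^*`-polynomial of the symmetric edge polytope of `K_{a+1,b+1}`. -/
noncomputable def hPoly (a b : ℕ) : Polynomial ℤ :=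
  ∑ i ∈ Finset.range (min a b + 1),
    C (((2 * i).choose i * a.choose i * b.choose i : ℕ) : ℤ) * X ^ i
      * (1 + X) ^ (a + b + 1 - 2 * i)

noncomputable def hPolyTerm (a b i : ℕ) : Polynomial ℤ :=
  C (((2 * i).choose i * a.choose i * b.choose i : ℕ) : ℤ) * X ^ i
    * (1 + X) ^ (a + b + 1 - 2 * i)

lemma Nat.cast_mul_choose_sub_one (n k : ℕ) :
    (n : ℤ) * (n - 1).choose k = ((n : ℤ) - k) * n.choose k := by
  rcases n with _ | n
  · rcases k with _ | k <;> simp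
  rcases le_or_gt k (n + 1) with hk | hk
  · have h := congrArg (Nat.cast : ℕ → ℤ) (Nat.choose_mul_succ_eq n k)
    push_cast [hk] at h
    simp only [Nat.add_sub_cancel, Nat.cast_add, Nat.cast_one]
    linarith
  · simp [Nat.choose_eq_zero_of_lt hk, Nat.choose_eq_zero_of_lt (show n < k by omega)]

lemma hPolyTerm_eq_zero {a b i : ℕ} (hi : min a b < i) : hPolyTerm a b i = 0 := by
  rcases min_lt_iff.mp hi with h | h <;> simp [hPolyTerm, Nat.choose_eq_zero_of_lt h]

lemma hPoly_eq_sum_range (a b : ℕ) {N : ℕ} (hN : min a b + 1 ≤ N) :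
    hPoly a b = ∑ i ∈ range N, hPolyTerm a b i :=
  sum_subset (range_subset_range.mpr hN) fun _ hi hni ↦
    hPolyTerm_eq_zero (by simp only [mem_range] at hi hni; omega)

lemma hPolyTerm_recurrence {a b i : ℕ} (ha : 1 ≤ a) (hb : 1 ≤ b) (hi : 2 * i ≤ a + b) :
    C ((b : ℤ) - a) * hPolyTerm a b i
      = (1 + X) * (C (b : ℤ) * hPolyTerm a (b - 1) i - C (a : ℤ) * hPolyTerm (a - 1) b i) := by
  have coeff : C ((b : ℤ) - a) * C (((2 * i).choose i * a.choose i * b.choose i : ℕ) : ℤ)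
      = C (b : ℤ) * C (((2 * i).choose i * a.choose i * (b - 1).choose i : ℕ) : ℤ)
        - C (a : ℤ) * C (((2 * i).choose i * (a - 1).choose i * b.choose i : ℕ) : ℤ) := by
    simp only [← C_mul, ← C_sub, Nat.cast_mul]
    congr 1
    linear_combination ((2 * i).choose i * b.choose i : ℤ) * Nat.cast_mul_choose_sub_one a i
      - ((2 * i).choose i * a.choose i : ℤ) * Nat.cast_mul_choose_sub_one b i
  simp only [hPolyTerm, show a + b + 1 - 2 * i = a + b - 2 * i + 1 by omega,
    show a + (b - 1) + 1 - 2 * i = a + b - 2 * i by omega,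
    show a - 1 + b + 1 - 2 * i = a + b - 2 * i by omega]
  linear_combination (X ^ i * (1 + X) ^ (a + b - 2 * i + 1) : ℤ[X]) * coeff

theorem stmt_1 (a b : ℕ) (ha : 1 ≤ a) (hb : 1 ≤ b) :
    C ((b : ℤ) - (a : ℤ)) * hPoly a b
      = (1 + X) * (C (b : ℤ) * hPoly a (b - 1) - C (a : ℤ) * hPoly (a - 1) b) := by
  rw [hPoly_eq_sum_range a b le_rfl, hPoly_eq_sum_range a (b - 1) (N := min a b + 1) (by omega),
    hPoly_eq_sum_range (a - 1) b (N := min a b + 1) (by omega), mul_sum, mul_sum, mul_sum,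
    ← sum_sub_distrib, mul_sum]
  exact sum_congr rfl fun i hi ↦
    hPolyTerm_recurrence ha hb (by simp only [mem_range] at hi; omega)
end

section
/- Let f_1, f_2 be γ-positive real polynomials with γ-polynomials γ_1, γ_2 respectively (i.e., f_i(t) = Σ_j γ_{i,j} t^j (1+t)^{deg f_i - 2j} with all γ_{i,j} ≥ 0), such that deg f_2 = deg f_1 + 1, f_1(0) ≠ 0, f_2(0) ≠ 0, and γ_1 interlaces γ_2. Then f_1 interlaces f_2. -/
/-!
For `u < 0` the quadratic `t - u (1 + t)²` has the real roots `upperRoot u ∈ (-1, 0)` and its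
inverse `lowerRoot u < -1`; as `u` increases, `upperRoot u` increases and `lowerRoot u`
decreases, since `t ↦ t / (1 + t)²` is increasing on `(-1, 1)`. A γ-polynomial
`γ = c ∏ (t - uᵢ)` with nonnegative coefficients and `γ(0) ≠ 0` has negative roots, and
homogenising `γ` gives `f = c (1 + t)^(d - 2m) ∏ (t - uᵢ (1 + t)²)`. So the roots of `f`,
listed as the upper roots, then `-1` repeated `d - 2m` times, then the lower roots in reverse
order, are decreasing, and the interlacing of the roots of `γ₁` and `γ₂` transfers term by
term: the upper roots by monotonicity, the lower roots by antitonicity, and the three blocks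
are separated by `-1`.
-/

open Polynomial Finset

/-- `Interlaces g f` : both `f` and `g` are real-rooted (they split over `ℝ`) and their
roots, listed in decreasing order `a 0 ≥ a 1 ≥ ⋯` (for `f`) and `b 0 ≥ b 1 ≥ ⋯` (for `g`),
satisfy `a 0 ≥ b 0 ≥ a 1 ≥ b 1 ≥ ⋯`. -/
def Interlaces (g f : Polynomial ℝ) : Prop :=
  ∃ (df dg : ℕ) (a : ℕ → ℝ) (b : ℕ → ℝ) (cf cg : ℝ),
    cf ≠ 0 ∧ cg ≠ 0 ∧
    f = C cf * ∏ i ∈ Finset.range df, (X - C (a i)) ∧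
    g = C cg * ∏ i ∈ Finset.range dg, (X - C (b i)) ∧
    dg ≤ df ∧ df ≤ dg + 1 ∧
    (∀ i, i < dg → b i ≤ a i) ∧
    (∀ i, i + 1 < df → a (i + 1) ≤ b i)
lemma Polynomial.aeval_homogenize {R S : Type*} [CommSemiring R] [CommSemiring S] [Algebra R S]
    (p : R[X]) (n : ℕ) (a b : S) :
    MvPolynomial.aeval ![a, b] (p.homogenize n) =
      ∑ k ∈ range (n + 1), algebraMap R S (p.coeff k) * a ^ k * b ^ (n - k) := by
  simp only [homogenize, map_sum, Finset.Nat.sum_antidiagonal_eq_sum_range_succ_mk,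
    MvPolynomial.aeval_monomial]
  refine sum_congr rfl fun k _ ↦ ?_
  rw [Finsupp.update_eq_add_single (by simp), Finsupp.prod_add_index',
    Finsupp.prod_single_index, Finsupp.prod_single_index]
  all_goals simp [pow_add, mul_assoc]

lemma Polynomial.aeval_homogenize_C_mul_prod_X_sub_C {R S ι : Type*} [CommRing R] [CommRing S]
    [Algebra R S] (c : R) (s : Finset ι) (u : ι → R) (a b : S) :
    MvPolynomial.aeval ![a, b] ((C c * ∏ i ∈ s, (X - C (u i))).homogenize #s) =
      algebraMap R S c * ∏ i ∈ s, (a - algebraMap R S (u i) * b) := by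
  have h := homogenize_finsetProd (s := s) (p := fun i ↦ X - C (u i)) (n := fun _ ↦ 1)
    fun i _ ↦ natDegree_X_sub_C_le _
  simp only [sum_const, smul_eq_mul, mul_one] at h
  simp [h]

lemma Polynomial.natDegree_C_mul_prod_X_sub_C {R ι : Type*} [CommRing R] [IsDomain R]
    {c : R} (hc : c ≠ 0) (s : Finset ι) (u : ι → R) :
    (C c * ∏ i ∈ s, (X - C (u i))).natDegree = #s := by
  rw [natDegree_C_mul hc, natDegree_finsetProd_X_sub_C_eq_card]

lemma Polynomial.neg_of_isRoot_of_coeff_nonneg {R : Type*} [CommSemiring R] [LinearOrder R]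
    [IsStrictOrderedRing R] {g : R[X]} (hg : ∀ j, 0 ≤ g.coeff j) (h0 : 0 < g.coeff 0) {r : R}
    (hr : g.IsRoot r) : r < 0 := by
  by_contra! hr0
  have : g.coeff 0 ≤ g.eval r := by
    rw [eval_eq_sum_range]
    simpa using single_le_sum (f := fun j ↦ g.coeff j * r ^ j)
      (fun j _ ↦ mul_nonneg (hg j) (pow_nonneg hr0 j)) (mem_range.2 (Nat.succ_pos _))
  exact h0.not_ge (hr.eq_zero ▸ this)

lemma forall_lt_zero_of_eq_C_mul_prod {g : ℝ[X]} {c : ℝ} {m : ℕ} {u : ℕ → ℝ}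
    (hg : ∀ j, 0 ≤ g.coeff j) (h0 : 0 < g.coeff 0)
    (hgu : g = C c * ∏ i ∈ range m, (X - C (u i))) : ∀ i < m, u i < 0 := fun i hi ↦
  neg_of_isRoot_of_coeff_nonneg hg h0 <| by
    simp [hgu, eval_prod, prod_eq_zero (mem_range.2 hi)]

noncomputable def gammaExpansion {R : Type*} [CommSemiring R] (g : R[X]) (d : ℕ) : R[X] :=
  ∑ j ∈ range (g.natDegree + 1), C (g.coeff j) * X ^ j * (1 + X) ^ (d - 2 * j)

section gammaExpansion

variable {R : Type*} [CommSemiring R]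

lemma eval_zero_gammaExpansion (g : R[X]) (d : ℕ) : (gammaExpansion g d).eval 0 = g.coeff 0 := by
  simp [gammaExpansion, eval_finsetSum, sum_range_succ']

lemma gammaExpansion_eq_mul_aeval_homogenize {g : R[X]} {d : ℕ} (hd : 2 * g.natDegree ≤ d) :
    gammaExpansion g d =
      (1 + X) ^ (d - 2 * g.natDegree) *
        MvPolynomial.aeval ![X, (1 + X) ^ 2] (g.homogenize g.natDegree) := by
  rw [aeval_homogenize, mul_sum]
  refine sum_congr rfl fun j hj ↦ ?_
  have hj : j ≤ g.natDegree := Nat.lt_succ_iff.1 (mem_range.1 hj)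
  rw [show d - 2 * j = d - 2 * g.natDegree + 2 * (g.natDegree - j) by omega, pow_add, pow_mul,
    algebraMap_eq]
  ring

end gammaExpansion

lemma Polynomial.X_sub_C_mul_one_add_X_sq {K : Type*} [Field K] {u t : K} (ht : t ≠ 0)
    (h : u * (1 + t) ^ 2 = t) :
    X - C u * (1 + X) ^ 2 = C (-u) * ((X - C t) * (X - C t⁻¹)) := by
  have hsum : C (u * (t + t⁻¹)) = (C (1 - 2 * u) : K[X]) := by
    congr 1
    field_simp
    linear_combination h
  have hprod : C (t * t⁻¹) = (1 : K[X]) := by rw [mul_inv_cancel₀ ht, map_one]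
  simp only [map_mul, map_add, map_sub, map_one, map_neg, map_ofNat] at hsum hprod ⊢
  linear_combination (-X : K[X]) * hsum + C u * hprod

noncomputable def upperRoot (u : ℝ) : ℝ := (1 - 2 * u - √(1 - 4 * u)) / (2 * u)

noncomputable def lowerRoot (u : ℝ) : ℝ := (upperRoot u)⁻¹

section Roots

variable {u u' : ℝ}

lemma one_lt_sqrt_one_sub_four_mul (hu : u < 0) : 1 < √(1 - 4 * u) :=
  (Real.lt_sqrt zero_le_one).2 (by linarith)

lemma upperRoot_neg (hu : u < 0) : upperRoot u < 0 := by
  have hs := one_lt_sqrt_one_sub_four_mul hu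
  have hs2 := Real.sq_sqrt (show 0 ≤ 1 - 4 * u by linarith)
  exact div_neg_of_pos_of_neg (by nlinarith) (by linarith)

lemma neg_one_lt_upperRoot (hu : u < 0) : -1 < upperRoot u := by
  have hs := one_lt_sqrt_one_sub_four_mul hu
  have : upperRoot u + 1 = (1 - √(1 - 4 * u)) / (2 * u) := by
    have := hu.ne
    unfold upperRoot; field_simp; ring
  linarith [div_pos_of_neg_of_neg (by linarith : 1 - √(1 - 4 * u) < 0) (by linarith : 2 * u < 0)]

lemma mul_one_add_upperRoot_sq (hu : u < 0) : u * (1 + upperRoot u) ^ 2 = upperRoot u := by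
  have hs2 := Real.sq_sqrt (show 0 ≤ 1 - 4 * u by linarith)
  have := hu.ne
  unfold upperRoot
  generalize √(1 - 4 * u) = s at hs2 ⊢
  field_simp
  linear_combination hs2

/-- `t ↦ t / (1 + t) ^ 2` is increasing on `(-1, 1)`: clearing denominators,
`(u - u') (1 + t)² (1 + t')² = (t - t') (1 - t t')`. -/
lemma le_of_mul_one_add_sq_eq {t t' : ℝ} (h : u * (1 + t) ^ 2 = t) (h' : u' * (1 + t') ^ 2 = t')
    (ht : t ∈ Set.Ioo (-1) 1) (ht' : t' ∈ Set.Ioo (-1) 1) (huu : u ≤ u') : t ≤ t' := by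
  obtain ⟨ht₁, ht₂⟩ := ht
  obtain ⟨ht₁', ht₂'⟩ := ht'
  by_contra! hlt
  have key : (u - u') * ((1 + t) ^ 2 * (1 + t') ^ 2) = (t - t') * (1 - t * t') := by
    linear_combination (1 + t') ^ 2 * h - (1 + t) ^ 2 * h'
  have hden : 0 < (1 + t) ^ 2 * (1 + t') ^ 2 := by
    have : 0 < 1 + t := by linarith
    have : 0 < 1 + t' := by linarith
    positivity
  have hprod : 0 < 1 - t * t' := by
    nlinarith [mul_pos (sub_pos.2 ht₂) (neg_lt_iff_pos_add'.1 ht₁'),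
      mul_pos (sub_pos.2 ht₂') (neg_lt_iff_pos_add'.1 ht₁)]
  nlinarith [mul_pos (sub_pos.2 hlt) hprod]

lemma upperRoot_mem_Ioo (hu : u < 0) : upperRoot u ∈ Set.Ioo (-1) 1 :=
  ⟨neg_one_lt_upperRoot hu, (upperRoot_neg hu).trans zero_lt_one⟩

lemma upperRoot_le_upperRoot (hu : u < 0) (hu' : u' < 0) (huu : u ≤ u') :
    upperRoot u ≤ upperRoot u' :=
  le_of_mul_one_add_sq_eq (mul_one_add_upperRoot_sq hu) (mul_one_add_upperRoot_sq hu')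
    (upperRoot_mem_Ioo hu) (upperRoot_mem_Ioo hu') huu

lemma lowerRoot_lt_neg_one (hu : u < 0) : lowerRoot u < -1 := by
  exact (inv_lt_of_neg (upperRoot_neg hu) (by norm_num)).2 (by simpa using neg_one_lt_upperRoot hu)

lemma lowerRoot_le_lowerRoot (hu : u < 0) (hu' : u' < 0) (huu : u ≤ u') :
    lowerRoot u' ≤ lowerRoot u :=
  (inv_le_inv_of_neg (upperRoot_neg hu') (upperRoot_neg hu)).2 (upperRoot_le_upperRoot hu hu' huu)

lemma X_sub_C_mul_one_add_X_sq_eq_upperRoot_lowerRoot (hu : u < 0) :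
    X - C u * (1 + X) ^ 2 = C (-u) * ((X - C (upperRoot u)) * (X - C (lowerRoot u))) :=
  X_sub_C_mul_one_add_X_sq (upperRoot_neg hu).ne (mul_one_add_upperRoot_sq hu)

end Roots

noncomputable def gammaRoots (m d : ℕ) (u : ℕ → ℝ) (i : ℕ) : ℝ :=
  if i < m then upperRoot (u i) else if i < d - m then -1 else lowerRoot (u (d - 1 - i))

lemma prod_X_sub_C_gammaRoots {m d : ℕ} (hm : 2 * m ≤ d) (u : ℕ → ℝ) :
    ∏ i ∈ range d, (X - C (gammaRoots m d u i)) =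
      (∏ i ∈ range m, (X - C (upperRoot (u i)))) * (1 + X) ^ (d - 2 * m) *
        ∏ i ∈ range m, (X - C (lowerRoot (u i))) := by
  rw [show d = m + (d - 2 * m) + m by omega, prod_range_add, prod_range_add,
    ← prod_range_reflect (fun i ↦ X - C (lowerRoot (u i)))]
  simp only [show m + (d - 2 * m) + m - 2 * m = d - 2 * m by omega]
  congr 1
  congr 1
  · refine prod_congr rfl fun i hi ↦ ?_
    rw [gammaRoots, if_pos (mem_range.1 hi)]
  · rw [prod_congr rfl (g := fun _ ↦ 1 + X) fun i hi ↦ ?_, prod_const, card_range]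
    have hi := mem_range.1 hi
    rw [gammaRoots, if_neg (by omega), if_pos (by omega), C_neg, C_1, sub_neg_eq_add, add_comm]
  · refine prod_congr rfl fun i hi ↦ ?_
    have hi := mem_range.1 hi
    rw [gammaRoots, if_neg (by omega), if_neg (by omega)]
    congr 4
    omega

lemma gammaExpansion_eq_C_mul_prod {g : ℝ[X]} {c : ℝ} {m d : ℕ} {u : ℕ → ℝ} (hc : c ≠ 0)
    (hg : g = C c * ∏ i ∈ range m, (X - C (u i))) (hu : ∀ i < m, u i < 0) (hd : 2 * m ≤ d) :
    gammaExpansion g d =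
      C (c * ∏ i ∈ range m, -u i) * ∏ i ∈ range d, (X - C (gammaRoots m d u i)) := by
  have hdeg : g.natDegree = m := by rw [hg, natDegree_C_mul_prod_X_sub_C hc, card_range]
  have hfactor : ∀ i ∈ range m, X - C (u i) * (1 + X) ^ 2 =
      C (-u i) * ((X - C (upperRoot (u i))) * (X - C (lowerRoot (u i)))) := fun i hi ↦
    X_sub_C_mul_one_add_X_sq_eq_upperRoot_lowerRoot (hu i (mem_range.1 hi))
  rw [gammaExpansion_eq_mul_aeval_homogenize (hdeg ▸ hd), hdeg]
  nth_rw 2 [← card_range m]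
  rw [hg, aeval_homogenize_C_mul_prod_X_sub_C, algebraMap_eq, prod_congr rfl hfactor,
    prod_mul_distrib, prod_mul_distrib, prod_X_sub_C_gammaRoots hd, map_mul, map_prod]
  ring

section Interlacing

variable {m₁ m₂ d : ℕ} {u v : ℕ → ℝ}

lemma gammaRoots_le_gammaRoots (hm₁ : 2 * m₁ ≤ d) (hm : m₁ ≤ m₂) (hm' : m₂ ≤ m₁ + 1)
    (hv : ∀ i < m₁, v i < 0) (hu : ∀ i < m₂, u i < 0)
    (hvu : ∀ i < m₁, v i ≤ u i) (huv : ∀ i, i + 1 < m₂ → u (i + 1) ≤ v i) {i : ℕ} (hi : i < d) :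
    gammaRoots m₁ d v i ≤ gammaRoots m₂ (d + 1) u i := by
  unfold gammaRoots
  split_ifs
  · exact upperRoot_le_upperRoot (hv i (by omega)) (hu i (by omega)) (hvu i (by omega))
  · omega
  · omega
  · exact (neg_one_lt_upperRoot (hu i (by omega))).le
  · exact le_rfl
  · omega
  · linarith [lowerRoot_lt_neg_one (hv (d - 1 - i) (by omega)),
      neg_one_lt_upperRoot (hu i (by omega))]
  · exact (lowerRoot_lt_neg_one (hv _ (by omega))).le
  · rw [show d + 1 - 1 - i = d - 1 - i + 1 by omega]
    exact lowerRoot_le_lowerRoot (hu _ (by omega)) (hv _ (by omega)) (huv _ (by omega))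

lemma gammaRoots_succ_le_gammaRoots (hm₁ : 2 * m₁ ≤ d) (hm : m₁ ≤ m₂) (hm' : m₂ ≤ m₁ + 1)
    (hv : ∀ i < m₁, v i < 0) (hu : ∀ i < m₂, u i < 0)
    (hvu : ∀ i < m₁, v i ≤ u i) (huv : ∀ i, i + 1 < m₂ → u (i + 1) ≤ v i) {i : ℕ} (hi : i < d) :
    gammaRoots m₂ (d + 1) u (i + 1) ≤ gammaRoots m₁ d v i := by
  unfold gammaRoots
  split_ifs
  · exact upperRoot_le_upperRoot (hu _ (by omega)) (hv i (by omega)) (huv i (by omega))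
  · omega
  · omega
  · exact (neg_one_lt_upperRoot (hv i (by omega))).le
  · exact le_rfl
  · omega
  · linarith [lowerRoot_lt_neg_one (hu (d + 1 - 1 - (i + 1)) (by omega)),
      neg_one_lt_upperRoot (hv i (by omega))]
  · exact (lowerRoot_lt_neg_one (hu _ (by omega))).le
  · rw [show d + 1 - 1 - (i + 1) = d - 1 - i by omega]
    exact lowerRoot_le_lowerRoot (hv _ (by omega)) (hu _ (by omega)) (hvu _ (by omega))

end Interlacing

theorem stmt_8 (f₁ f₂ g₁ g₂ : Polynomial ℝ)
    (hg₁ : ∀ j, 0 ≤ g₁.coeff j) (hg₂ : ∀ j, 0 ≤ g₂.coeff j)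
    (hd₁ : 2 * g₁.natDegree ≤ f₁.natDegree) (hd₂ : 2 * g₂.natDegree ≤ f₂.natDegree)
    (hf₁ : f₁ = ∑ j ∈ Finset.range (g₁.natDegree + 1),
      C (g₁.coeff j) * X ^ j * (1 + X) ^ (f₁.natDegree - 2 * j))
    (hf₂ : f₂ = ∑ j ∈ Finset.range (g₂.natDegree + 1),
      C (g₂.coeff j) * X ^ j * (1 + X) ^ (f₂.natDegree - 2 * j))
    (hdeg : f₂.natDegree = f₁.natDegree + 1)
    (h₁0 : f₁.eval 0 ≠ 0) (h₂0 : f₂.eval 0 ≠ 0)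
    (hint : Interlaces g₁ g₂) :
    Interlaces f₁ f₂ := by
  obtain ⟨m₂, m₁, u, v, c₂, c₁, hc₂, hc₁, hu, hv, hm, hm', hvu, huv⟩ := hint
  replace hf₁ : f₁ = gammaExpansion g₁ f₁.natDegree := hf₁
  replace hf₂ : f₂ = gammaExpansion g₂ f₂.natDegree := hf₂
  have hv_neg := forall_lt_zero_of_eq_C_mul_prod hg₁
    ((hg₁ 0).lt_of_ne' (by rwa [hf₁, eval_zero_gammaExpansion] at h₁0)) hv
  have hu_neg := forall_lt_zero_of_eq_C_mul_prod hg₂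
    ((hg₂ 0).lt_of_ne' (by rwa [hf₂, eval_zero_gammaExpansion] at h₂0)) hu
  rw [hv, natDegree_C_mul_prod_X_sub_C hc₁, card_range] at hd₁
  rw [hu, natDegree_C_mul_prod_X_sub_C hc₂, card_range] at hd₂
  rw [gammaExpansion_eq_C_mul_prod hc₁ hv hv_neg hd₁] at hf₁
  rw [gammaExpansion_eq_C_mul_prod hc₂ hu hu_neg hd₂, hdeg] at hf₂
  have hconst {m : ℕ} {c : ℝ} {w : ℕ → ℝ} (hc : c ≠ 0) (hw : ∀ i < m, w i < 0) :
      c * ∏ i ∈ range m, -w i ≠ 0 :=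
    mul_ne_zero hc (prod_ne_zero_iff.2 fun i hi ↦ neg_ne_zero.2 (hw i (mem_range.1 hi)).ne)
  refine ⟨_, _, _, _, _, _, hconst hc₂ hu_neg, hconst hc₁ hv_neg, hf₂, hf₁, by omega, le_rfl,
    fun i hi ↦ gammaRoots_le_gammaRoots hd₁ hm hm' hv_neg hu_neg hvu huv hi,
    fun i hi ↦ gammaRoots_succ_le_gammaRoots hd₁ hm hm' hv_neg hu_neg hvu huv (by omega)⟩
end

section
/- For all natural numbers a, b ≥ 1, the polynomial Σ_{i=0}^{min(a,b)} C(2i,i)·C(a,i)·C(b,i)·t^i is the f-polynomial of a flag balanced simplicial complex; explicitly, the simplicial complex Δ on vertex set {x_{i,j} : 1≤i≤a, 1≤j≤b} ∪ {y_{i,j} : 1≤i≤a, 1≤j≤b} whose faces are the subsets containing none of the following pairs: {x_{i,j}, x_{i',j'}} with i≤i' and j≥j'; {y_{i,j}, y_{i',j'}} with i≤i' and j≥j'; {x_{i,j}, y_{i',j}} for any i,i',j; {x_{i,j}, y_{i,j'}} for any i,j,j', satisfies: the number of faces of Δ with exactly k vertices equals C(2k,k)·C(a,k)·C(b,k) for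 every k ≥ 0. -/
/-!
A face splits into its `x`-part and its `y`-part. The first two families of non-faces say that
each part is a staircase: any two of its points increase strictly in both coordinates. A staircase
of size `m` is determined by its `m` rows and its `m` columns, and every such pair of `m`-sets
occurs. The last two families say that the two parts use disjoint rows and disjoint columns. So
the `k`-faces whose `x`-part has size `m` correspond to a pair of disjoint row sets and a pair of
disjoint column sets, of sizes `m` and `k - m`; there are `C(a,k) C(k,m) · C(b,k) C(k,m)` of them,
and `∑ₘ C(k,m)² = C(2k,k)`.
-/

open Finset

/-- Vertices of the complex `Δ`: `Sum.inl (i,j)` is `x_{i,j}`, `Sum.inr (i,j)` is `y_{i,j}`. -/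
abbrev DeltaVertex (a b : ℕ) := (Fin a × Fin b) ⊕ (Fin a × Fin b)

/-- `F` is a face of `Δ`: it contains none of the minimal non-faces
`{x_{i,j}, x_{i',j'}}` with `i ≤ i'`, `j ≥ j'`; `{y_{i,j}, y_{i',j'}}` with `i ≤ i'`, `j ≥ j'`;
`{x_{i,j}, y_{i',j}}`; `{x_{i,j}, y_{i,j'}}`. -/
def IsFaceDelta {a b : ℕ} (F : Finset (DeltaVertex a b)) : Prop :=
  (∀ p q : Fin a × Fin b, Sum.inl p ∈ F → Sum.inl q ∈ F → p ≠ q →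
      ¬(p.1 ≤ q.1 ∧ q.2 ≤ p.2)) ∧
  (∀ p q : Fin a × Fin b, Sum.inr p ∈ F → Sum.inr q ∈ F → p ≠ q →
      ¬(p.1 ≤ q.1 ∧ q.2 ≤ p.2)) ∧
  (∀ p q : Fin a × Fin b, Sum.inl p ∈ F → Sum.inr q ∈ F → p.1 ≠ q.1 ∧ p.2 ≠ q.2)

section Staircase

variable {α β : Type*} [LinearOrder α] [LinearOrder β]

def IsStaircase (X : Finset (α × β)) : Prop :=
  (X : Set (α × β)).Pairwise fun p q => ¬(p.1 ≤ q.1 ∧ q.2 ≤ p.2)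

variable {X Y : Finset (α × β)} {p q : α × β}

lemma IsStaircase.snd_lt_snd (hX : IsStaircase X) (hp : p ∈ X) (hq : q ∈ X)
    (h : p.1 < q.1) : p.2 < q.2 :=
  lt_of_not_ge fun hle => hX hp hq (fun e => h.ne (congrArg Prod.fst e)) ⟨h.le, hle⟩

lemma IsStaircase.injOn_fst (hX : IsStaircase X) : Set.InjOn Prod.fst (X : Set (α × β)) := by
  intro p hp q hq e
  by_contra hne
  rcases le_total q.2 p.2 with h | h
  · exact hX hp hq hne ⟨e.le, h⟩
  · exact hX hq hp (Ne.symm hne) ⟨e.ge, h⟩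

lemma IsStaircase.injOn_snd (hX : IsStaircase X) : Set.InjOn Prod.snd (X : Set (α × β)) := by
  intro p hp q hq e
  by_contra hne
  rcases le_total p.1 q.1 with h | h
  · exact hX hp hq hne ⟨h, e.ge⟩
  · exact hX hq hp (Ne.symm hne) ⟨h, e.le⟩

lemma IsStaircase.card_image_fst (hX : IsStaircase X) : #(X.image Prod.fst) = #X :=
  card_image_of_injOn hX.injOn_fst

lemma IsStaircase.card_image_snd (hX : IsStaircase X) : #(X.image Prod.snd) = #X :=
  card_image_of_injOn hX.injOn_snd

def staircaseOf (R : Finset α) (C : Finset β) (h : #C = #R) : Finset (α × β) :=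
  univ.image fun i => (R.orderEmbOfFin rfl i, C.orderEmbOfFin h i)

section staircaseOf

variable (R : Finset α) (C : Finset β) (h : #C = #R)

lemma isStaircase_staircaseOf : IsStaircase (staircaseOf R C h) := by
  simp only [IsStaircase, staircaseOf, coe_image, coe_univ, Set.image_univ]
  rintro _ ⟨i, rfl⟩ _ ⟨j, rfl⟩ hne ⟨hij, hji⟩
  rw [OrderEmbedding.le_iff_le] at hij hji
  exact hne (by rw [le_antisymm hij hji])

lemma image_fst_staircaseOf : (staircaseOf R C h).image Prod.fst = R := by
  simp [staircaseOf, image_image, Function.comp_def]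

lemma image_snd_staircaseOf : (staircaseOf R C h).image Prod.snd = C := by
  simp [staircaseOf, image_image, Function.comp_def]

lemma card_staircaseOf : #(staircaseOf R C h) = #R := by
  rw [staircaseOf, card_image_of_injective, card_univ, Fintype.card_fin]
  exact fun i j hij => (R.orderEmbOfFin rfl).injective (congrArg Prod.fst hij)

end staircaseOf

lemma IsStaircase.eq_staircaseOf (hX : IsStaircase X) :
    X = staircaseOf (X.image Prod.fst) (X.image Prod.snd)
      (by rw [hX.card_image_fst, hX.card_image_snd]) := by
  set R := X.image Prod.fst
  set C := X.image Prod.snd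
  have hCR : #C = #R := by rw [hX.card_image_fst, hX.card_image_snd]
  choose p hpX hp using fun i => mem_image.mp (R.orderEmbOfFin_mem rfl i)
  -- the column of the point in the `i`-th row increases with `i`, so it is the `i`-th column
  have hcol : (fun i => (p i).2) = C.orderEmbOfFin hCR :=
    orderEmbOfFin_unique _ (fun i => mem_image_of_mem _ (hpX i)) fun i j hij =>
      hX.snd_lt_snd (hpX i) (hpX j) (by rw [hp, hp]; exact (R.orderEmbOfFin rfl).strictMono hij)
  refine (eq_of_subset_of_card_le ?_ (by rw [card_staircaseOf, hX.card_image_fst])).symm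
  simp only [staircaseOf, image_subset_iff, mem_univ, forall_const]
  intro i
  rw [← hp, ← congrFun hcol i]
  exact hpX i

lemma IsStaircase.eq_of_image_eq (hX : IsStaircase X) (hY : IsStaircase Y)
    (hfst : X.image Prod.fst = Y.image Prod.fst) (hsnd : X.image Prod.snd = Y.image Prod.snd) :
    X = Y := by
  rw [hX.eq_staircaseOf, hY.eq_staircaseOf]
  simp only [hfst, hsnd]

end Staircase

lemma card_disjoint_pairs (α : Type*) [Fintype α] [DecidableEq α] (m l : ℕ) :
    #{RS : Finset α × Finset α | #RS.1 = m ∧ #RS.2 = l ∧ Disjoint RS.1 RS.2}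
      = (Fintype.card α).choose m * (Fintype.card α - m).choose l := by
  rw [card_eq_sum_card_fiberwise (f := Prod.fst) (t := powersetCard m univ)
    (fun RS hRS => by simp_all), sum_const_nat (m := (Fintype.card α - m).choose l),
    card_powersetCard, card_univ]
  intro R hR
  rw [mem_powersetCard_univ] at hR
  rw [← hR, ← card_compl, ← card_powersetCard]
  refine card_nbij' Prod.snd (Prod.mk R) ?_ ?_ ?_ fun _ _ => rfl
  · rintro ⟨_, S⟩
    simp +contextual [subset_compl_iff_disjoint_left, and_comm]
  · intro S
    simp +contextual [subset_compl_iff_disjoint_left, and_comm]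
  · rintro ⟨_, S⟩
    simp +contextual

lemma isFaceDelta_iff {a b : ℕ} (F : Finset (DeltaVertex a b)) :
    IsFaceDelta F ↔ IsStaircase F.toLeft ∧ IsStaircase F.toRight ∧
      Disjoint (F.toLeft.image Prod.fst) (F.toRight.image Prod.fst) ∧
      Disjoint (F.toLeft.image Prod.snd) (F.toRight.image Prod.snd) := by
  simp only [IsFaceDelta, IsStaircase, Set.Pairwise, mem_coe, mem_toLeft, mem_toRight,
    disjoint_left, mem_image, not_exists, not_and]
  grind

open Classical in
lemma card_faces_with_card_toLeft {a b k m : ℕ} (hm : m ≤ k) :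
    #{F : Finset (DeltaVertex a b) | (IsFaceDelta F ∧ #F = k) ∧ #F.toLeft = m} =
      #{RS : Finset (Fin a) × Finset (Fin a) |
          #RS.1 = m ∧ #RS.2 = k - m ∧ Disjoint RS.1 RS.2} *
        #{CS : Finset (Fin b) × Finset (Fin b) |
          #CS.1 = m ∧ #CS.2 = k - m ∧ Disjoint CS.1 CS.2} := by
  rw [← card_product]
  refine card_bij (fun F _ => ((F.toLeft.image Prod.fst, F.toRight.image Prod.fst),
    (F.toLeft.image Prod.snd, F.toRight.image Prod.snd))) ?_ ?_ ?_
  · intro F hF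
    simp only [mem_filter, mem_univ, true_and, mem_product, isFaceDelta_iff] at hF ⊢
    obtain ⟨⟨⟨hX, hY, hrows, hcols⟩, hk⟩, rfl⟩ := hF
    have hYcard : #F.toRight = k - #F.toLeft := by
      rw [← hk, ← card_toLeft_add_card_toRight, Nat.add_sub_cancel_left]
    simp only [hX.card_image_fst, hX.card_image_snd, hY.card_image_fst, hY.card_image_snd, hYcard,
      true_and]
    exact ⟨hrows, hcols⟩
  · intro F hF F' hF' h
    simp only [mem_filter, mem_univ, true_and, isFaceDelta_iff, Prod.ext_iff] at hF hF' h
    obtain ⟨⟨⟨hX, hY, -⟩, -⟩, -⟩ := hF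
    obtain ⟨⟨⟨hX', hY', -⟩, -⟩, -⟩ := hF'
    obtain ⟨⟨hrowX, hrowY⟩, hcolX, hcolY⟩ := h
    rw [← toLeft_disjSum_toRight (u := F), ← toLeft_disjSum_toRight (u := F'),
      hX.eq_of_image_eq hX' hrowX hcolX, hY.eq_of_image_eq hY' hrowY hcolY]
  · rintro ⟨⟨R₁, R₂⟩, C₁, C₂⟩ h
    simp only [mem_filter, mem_univ, true_and, mem_product] at h
    obtain ⟨⟨hR₁, hR₂, hrows⟩, hC₁, hC₂, hcols⟩ := h
    refine ⟨(staircaseOf R₁ C₁ (hC₁.trans hR₁.symm)).disjSum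
      (staircaseOf R₂ C₂ (hC₂.trans hR₂.symm)), ?_, ?_⟩
    · simp only [mem_filter, mem_univ, true_and, isFaceDelta_iff, toLeft_disjSum, toRight_disjSum,
        card_disjSum, card_staircaseOf, image_fst_staircaseOf, image_snd_staircaseOf,
        isStaircase_staircaseOf]
      exact ⟨⟨⟨hrows, hcols⟩, by omega⟩, hR₁⟩
    · simp only [toLeft_disjSum, toRight_disjSum, image_fst_staircaseOf, image_snd_staircaseOf]

lemma sum_range_choose_mul_choose (a b k : ℕ) :
    ∑ m ∈ range (k + 1),
        a.choose m * (a - m).choose (k - m) * (b.choose m * (b - m).choose (k - m)) =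
      (2 * k).choose k * a.choose k * b.choose k := by
  rw [← Nat.sum_range_choose_sq, sum_mul, sum_mul]
  refine sum_congr rfl fun m hm => ?_
  have hmk : m ≤ k := mem_range_succ_iff.mp hm
  rw [← Nat.choose_mul hmk, ← Nat.choose_mul hmk]
  ring

theorem stmt_11_general (a b : ℕ) (k : ℕ) :
    {F : Finset (DeltaVertex a b) | IsFaceDelta F ∧ F.card = k}.ncard
      = (2 * k).choose k * a.choose k * b.choose k := by
  classical
  rw [Set.ncard_eq_toFinset_card', Set.toFinset_ofPred, card_eq_sum_card_fiberwise
    (f := fun F => #F.toLeft) (t := range (k + 1)) fun F hF => ?_]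
  · rw [← sum_range_choose_mul_choose]
    refine sum_congr rfl fun m hm => ?_
    rw [filter_filter, card_faces_with_card_toLeft (mem_range_succ_iff.mp hm),
      card_disjoint_pairs, card_disjoint_pairs, Fintype.card_fin, Fintype.card_fin]
  · rw [mem_coe, mem_filter] at hF
    rw [mem_coe, mem_range_succ_iff, ← hF.2.2]
    exact card_toLeft_le

theorem stmt_11 (a b : ℕ) (ha : 1 ≤ a) (hb : 1 ≤ b) (k : ℕ) :
    {F : Finset (DeltaVertex a b) | IsFaceDelta F ∧ F.card = k}.ncard
      = (2 * k).choose k * a.choose k * b.choose k :=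
  stmt_11_general a b k
end

section
/- For all natural numbers a, b, the number of planar spanning trees of the complete bipartite graph K_{a+1,b+1} (drawn with the a+1 upper vertices on one horizontal line in order and the b+1 lower vertices on a parallel line in order, edges drawn as straight segments) equals C(a+b, a). -/
/-!
A noncrossing spanning tree of `K_{a+1,b+1}` is a staircase: the neighbours of `v_i` form an
interval of rows `[c_{i-1}, c_i]` with `0 = c_{-1} ≤ c_0 ≤ ⋯ ≤ c_{a-1} ≤ c_a = b`. Noncrossing
gives `max (column i) ≤ min (column (i+1))`; equality holds because otherwise no edge would join
the vertices on the left of the gap to those on its right. Conversely every monotone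
`c : Fin a → Fin (b + 1)` yields such a tree, which has `a + b + 1` edges. Monotone sequences of
length `a` in `b + 1` rows are multisets of size `a`, and there are `C(a + b, a)` of them.
-/

open Finset

/-- The graph on the vertices of `K_{a+1,b+1}` (`Sum.inl i` are the upper vertices `v_i`,
`Sum.inr j` the lower vertices `w_j`) whose edges are the pairs in `T`. -/
def treeGraph (a b : ℕ) (T : Finset (Fin (a + 1) × Fin (b + 1))) :
    SimpleGraph (Fin (a + 1) ⊕ Fin (b + 1)) :=
  SimpleGraph.fromRel (fun u v => ∃ p ∈ T, u = Sum.inl p.1 ∧ v = Sum.inr p.2)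

theorem SimpleGraph.Connected.exists_adj_of_mem_of_notMem {V : Type*} {G : SimpleGraph V}
    (h : G.Connected) {S : Set V} {u v : V} (hu : u ∈ S) (hv : v ∉ S) :
    ∃ x ∈ S, ∃ y ∉ S, G.Adj x y := by
  obtain ⟨d, -, hd, hd'⟩ := (h u v).some.exists_boundary_dart S hu hv
  exact ⟨_, hd, _, hd', d.adj⟩

theorem Nat.card_monotone_fin_eq_card_sym (α : Type*) [LinearOrder α] (k : ℕ) :
    Nat.card {f : Fin k → α // Monotone f} = Nat.card (Sym α k) := by
  refine Nat.card_eq_of_bijective (fun f => ⟨(List.ofFn f.1 : Multiset α), by simp⟩) ⟨?_, ?_⟩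
  · rintro ⟨f, hf⟩ ⟨g, hg⟩ h
    have hp : List.Perm (List.ofFn f) (List.ofFn g) :=
      Multiset.coe_eq_coe.mp (congrArg Subtype.val h)
    exact Subtype.ext (List.ofFn_injective (hp.eq_of_sortedLE hf.sortedLE_ofFn hg.sortedLE_ofFn))
  · intro s
    set l := s.1.sort (· ≤ ·)
    have hl : l.length = k := by simp [l]
    have hsorted : Monotone l.get := (Multiset.pairwise_sort s.1 (· ≤ ·)).sortedLE.monotone_get
    refine ⟨⟨fun i => l.get (i.cast hl.symm), hsorted.comp (Fin.cast_strictMono _).monotone⟩,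
      Sym.coe_injective ?_⟩
    change ((List.ofFn fun i => l.get (i.cast hl.symm) : List α) : Multiset α) = s.1
    rw [← List.ofFn_congr hl l.get, List.ofFn_get, Multiset.sort_eq]

theorem Nat.card_monotone_fin (α : Type*) [Fintype α] [LinearOrder α] (k : ℕ) :
    Nat.card {f : Fin k → α // Monotone f} = (Fintype.card α + k - 1).choose k := by
  classical
  rw [Nat.card_monotone_fin_eq_card_sym, Nat.card_eq_fintype_card, Sym.card_sym_eq_choose]

open Sum

variable {a b : ℕ}

theorem treeGraph_adj {T : Finset (Fin (a + 1) × Fin (b + 1))}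
    {u v : Fin (a + 1) ⊕ Fin (b + 1)} :
    (treeGraph a b T).Adj u v ↔
      ∃ p ∈ T, (u = inl p.1 ∧ v = inr p.2) ∨ (u = inr p.2 ∧ v = inl p.1) := by
  simp only [treeGraph, SimpleGraph.fromRel_adj, ne_eq]
  constructor
  · rintro ⟨-, ⟨p, hp, h⟩ | ⟨p, hp, h⟩⟩
    · exact ⟨p, hp, .inl h⟩
    · exact ⟨p, hp, .inr h.symm⟩
  · rintro ⟨p, hp, ⟨rfl, rfl⟩ | ⟨rfl, rfl⟩⟩ <;> simp_all

@[simp]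
theorem treeGraph_adj_inl_inr {T : Finset (Fin (a + 1) × Fin (b + 1))} {i : Fin (a + 1)}
    {j : Fin (b + 1)} :
    (treeGraph a b T).Adj (inl i) (inr j) ↔ (i, j) ∈ T := by
  simp [treeGraph_adj]

def IsNoncrossing (T : Finset (Fin (a + 1) × Fin (b + 1))) : Prop :=
  ∀ p ∈ T, ∀ q ∈ T, p.1 < q.1 → p.2 ≤ q.2

/-- With `c (-1) = 0` and `c a = b`, column `i` of `staircase c` runs from row
`stairBottom c i = c (i - 1)` to row `stairTop c i = c i`. -/
def stairBottom (c : Fin a → Fin (b + 1)) : Fin (a + 1) → Fin (b + 1) := Fin.cons 0 c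

def stairTop (c : Fin a → Fin (b + 1)) : Fin (a + 1) → Fin (b + 1) := Fin.snoc c (Fin.last b)

@[simp] theorem stairBottom_zero (c : Fin a → Fin (b + 1)) : stairBottom c 0 = 0 := rfl
@[simp] theorem stairBottom_succ (c : Fin a → Fin (b + 1)) (k : Fin a) :
    stairBottom c k.succ = c k := rfl
@[simp] theorem stairTop_last (c : Fin a → Fin (b + 1)) :
    stairTop c (Fin.last a) = Fin.last b := by
  simp [stairTop]
@[simp] theorem stairTop_castSucc (c : Fin a → Fin (b + 1)) (k : Fin a) :
    stairTop c k.castSucc = c k := by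
  simp [stairTop]

theorem monotone_stairTop {c : Fin a → Fin (b + 1)} (hc : Monotone c) : Monotone (stairTop c) := by
  intro i i' h
  induction i' using Fin.lastCases with
  | last => simp [stairTop_last, Fin.le_last]
  | cast k' =>
    induction i using Fin.lastCases with
    | last => exact absurd h (not_le.2 (Fin.castSucc_lt_last k'))
    | cast k => simpa using hc (Fin.castSucc_le_castSucc_iff.1 h)

theorem stairBottom_le_stairTop {c : Fin a → Fin (b + 1)} (hc : Monotone c) (i : Fin (a + 1)) :
    stairBottom c i ≤ stairTop c i := by
  induction i using Fin.cases with
  | zero => exact Fin.zero_le _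
  | succ k => simpa using monotone_stairTop hc (Fin.castSucc_le_succ k)

def staircase (c : Fin a → Fin (b + 1)) : Finset (Fin (a + 1) × Fin (b + 1)) :=
  univ.filter fun p => stairBottom c p.1 ≤ p.2 ∧ p.2 ≤ stairTop c p.1

@[simp]
theorem mem_staircase {c : Fin a → Fin (b + 1)} {p : Fin (a + 1) × Fin (b + 1)} :
    p ∈ staircase c ↔ stairBottom c p.1 ≤ p.2 ∧ p.2 ≤ stairTop c p.1 := by
  simp [staircase]

theorem card_staircase {c : Fin a → Fin (b + 1)} (hc : Monotone c) :
    #(staircase c) = a + b + 1 := by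
  have hcols : #(staircase c) = ∑ i, ((stairTop c i : ℕ) + 1 - stairBottom c i) := by
    rw [staircase, card_filter, Fintype.sum_prod_type]
    refine sum_congr rfl fun i _ => ?_
    rw [← Fin.card_Icc, ← card_filter]
    congr 1
    ext j
    simp
  have hcancel : ∑ i, (((stairTop c i : ℕ) + 1 - stairBottom c i) + stairBottom c i)
      = ∑ i, ((stairTop c i : ℕ) + 1) :=
    sum_congr rfl fun i _ => Nat.sub_add_cancel
      (Nat.le_succ_of_le (Fin.le_def.1 (stairBottom_le_stairTop hc i)))
  have hbottom : ∑ i, (stairBottom c i : ℕ) = ∑ k, (c k : ℕ) := by simp [Fin.sum_univ_succ]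
  have htop : ∑ i, (stairTop c i : ℕ) = ∑ k, (c k : ℕ) + b := by simp [Fin.sum_univ_castSucc]
  rw [sum_add_distrib, sum_add_distrib, hbottom, htop] at hcancel
  simp only [sum_const, card_univ, Fintype.card_fin, smul_eq_mul, mul_one] at hcancel
  omega

theorem isNoncrossing_staircase {c : Fin a → Fin (b + 1)} (hc : Monotone c) :
    IsNoncrossing (staircase c) := by
  rintro ⟨i, j⟩ hp ⟨i', j'⟩ hq (h : i < i')
  rw [mem_staircase] at hp hq
  obtain ⟨k, rfl⟩ := Fin.exists_succ_eq.2 (Fin.ne_zero_of_lt h)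
  calc j ≤ stairTop c i := hp.2
    _ ≤ stairTop c k.castSucc := monotone_stairTop hc (Fin.le_castSucc_iff.2 h)
    _ = stairBottom c k.succ := by simp
    _ ≤ j' := hq.1

theorem staircase_injective : Function.Injective
    fun c : {c : Fin a → Fin (b + 1) // Monotone c} => staircase c.1 := by
  have hle : ∀ {c c' : Fin a → Fin (b + 1)}, Monotone c → staircase c = staircase c' → c ≤ c' := by
    intro c c' hc h k
    have hk : (k.castSucc, c k) ∈ staircase c := by
      simpa using stairBottom_le_stairTop hc k.castSucc
    rw [h, mem_staircase] at hk
    simpa using hk.2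
  rintro ⟨c, hc⟩ ⟨c', hc'⟩ h
  exact Subtype.ext (le_antisymm (hle hc h) (hle hc' h.symm))

theorem exists_mem_staircase_of_snd (c : Fin a → Fin (b + 1)) (j : Fin (b + 1)) :
    ∃ i, (i, j) ∈ staircase c := by
  set s := univ.filter fun i => stairBottom c i ≤ j
  have hs : s.Nonempty := ⟨0, by simp [s]⟩
  refine ⟨s.max' hs, mem_staircase.2 ⟨(mem_filter.1 (s.max'_mem hs)).2, ?_⟩⟩
  induction hi : s.max' hs using Fin.lastCases with
  | last => simpa using Fin.le_last j
  | cast k =>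
    by_contra! hlt
    have hsucc : k.succ ∈ s := by simpa [s] using hlt.le
    exact absurd (hi ▸ s.le_max' _ hsucc) (not_le.2 Fin.castSucc_lt_succ)

theorem connected_treeGraph_staircase {c : Fin a → Fin (b + 1)} (hc : Monotone c) :
    (treeGraph a b (staircase c)).Connected := by
  set G := treeGraph a b (staircase c)
  have hinl : ∀ i, G.Reachable (inl 0) (inl i) := by
    intro i
    induction i using Fin.induction with
    | zero => rfl
    | succ k ih =>
      have h₁ : G.Adj (inl k.castSucc) (inr (c k)) := by
        simpa [G] using stairBottom_le_stairTop hc k.castSucc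
      have h₂ : G.Adj (inl k.succ) (inr (c k)) := by
        simpa [G] using stairBottom_le_stairTop hc k.succ
      exact ih.trans (h₁.reachable.trans h₂.reachable.symm)
  refine (SimpleGraph.connected_iff_exists_forall_reachable G).2 ⟨inl 0, ?_⟩
  rintro (i | j)
  · exact hinl i
  · obtain ⟨i, hi⟩ := exists_mem_staircase_of_snd c j
    exact (hinl i).trans (treeGraph_adj_inl_inr.2 hi).reachable

noncomputable def colMin (T : Finset (Fin (a + 1) × Fin (b + 1))) (i : Fin (a + 1)) :
    Fin (b + 1) :=
  (T.filter (·.1 = i)).inf Prod.snd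

noncomputable def colMax (T : Finset (Fin (a + 1) × Fin (b + 1))) (i : Fin (a + 1)) :
    Fin (b + 1) :=
  (T.filter (·.1 = i)).sup Prod.snd

section Converse

variable {T : Finset (Fin (a + 1) × Fin (b + 1))}

theorem exists_mem_of_fst (hT : (treeGraph a b T).Connected) (i : Fin (a + 1)) :
    ∃ j, (i, j) ∈ T := by
  obtain ⟨x, rfl, y, -, hxy⟩ :=
    hT.exists_adj_of_mem_of_notMem (S := {inl i}) rfl (v := inr 0) (by simp)
  obtain ⟨p, hp, ⟨h₁, rfl⟩ | ⟨h₁, -⟩⟩ := treeGraph_adj.1 hxy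
  · exact ⟨p.2, by simpa [inl.inj h₁] using hp⟩
  · exact absurd h₁ inl_ne_inr

theorem exists_mem_of_snd (hT : (treeGraph a b T).Connected) (j : Fin (b + 1)) :
    ∃ i, (i, j) ∈ T := by
  obtain ⟨x, rfl, y, -, hxy⟩ :=
    hT.exists_adj_of_mem_of_notMem (S := {inr j}) rfl (v := inl 0) (by simp)
  obtain ⟨p, hp, ⟨h₁, -⟩ | ⟨h₁, rfl⟩⟩ := treeGraph_adj.1 hxy
  · exact absurd h₁ inr_ne_inl
  · exact ⟨p.1, by simpa [inr.inj h₁] using hp⟩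

theorem exists_mem_crossing (hT : (treeGraph a b T).Connected) (k : Fin a) (y : Fin (b + 1)) :
    ∃ p ∈ T, (p.1 ≤ k.castSucc ∧ y < p.2) ∨ (k.castSucc < p.1 ∧ p.2 ≤ y) := by
  set S : Set (Fin (a + 1) ⊕ Fin (b + 1)) := Sum.elim (· ≤ k.castSucc) (· ≤ y)
  obtain ⟨u, hu, v, hv, huv⟩ := hT.exists_adj_of_mem_of_notMem (S := S) (u := inl 0)
    (v := inl (Fin.last a)) (Fin.zero_le _) (not_le.2 (Fin.castSucc_lt_last k))
  obtain ⟨p, hp, ⟨rfl, rfl⟩ | ⟨rfl, rfl⟩⟩ := treeGraph_adj.1 huv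
  · exact ⟨p, hp, .inl ⟨hu, not_le.1 hv⟩⟩
  · exact ⟨p, hp, .inr ⟨not_le.1 hv, hu⟩⟩

theorem colMin_le {i : Fin (a + 1)} {j : Fin (b + 1)} (h : (i, j) ∈ T) : colMin T i ≤ j :=
  inf_le (s := T.filter (·.1 = i)) (mem_filter.2 ⟨h, rfl⟩)

theorem le_colMax {i : Fin (a + 1)} {j : Fin (b + 1)} (h : (i, j) ∈ T) : j ≤ colMax T i :=
  le_sup (f := Prod.snd) (mem_filter.2 ⟨h, rfl⟩ : (i, j) ∈ T.filter (·.1 = i))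

theorem colMin_mem (hT : (treeGraph a b T).Connected) (i : Fin (a + 1)) :
    (i, colMin T i) ∈ T := by
  obtain ⟨j, hj⟩ := exists_mem_of_fst hT i
  obtain ⟨p, hp, hmin⟩ :=
    exists_mem_eq_inf (T.filter (·.1 = i)) ⟨_, mem_filter.2 ⟨hj, rfl⟩⟩ Prod.snd
  obtain ⟨hpT, rfl⟩ := mem_filter.1 hp
  rwa [colMin, hmin]

theorem colMax_mem (hT : (treeGraph a b T).Connected) (i : Fin (a + 1)) :
    (i, colMax T i) ∈ T := by
  obtain ⟨j, hj⟩ := exists_mem_of_fst hT i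
  obtain ⟨p, hp, hmax⟩ :=
    exists_mem_eq_sup (T.filter (·.1 = i)) ⟨_, mem_filter.2 ⟨hj, rfl⟩⟩ Prod.snd
  obtain ⟨hpT, rfl⟩ := mem_filter.1 hp
  rwa [colMax, hmax]

theorem colMin_le_of_le (hT : (treeGraph a b T).Connected) (hnc : IsNoncrossing T)
    {i i' : Fin (a + 1)} {j : Fin (b + 1)} (hi : i' ≤ i) (h : (i, j) ∈ T) : colMin T i' ≤ j := by
  rcases hi.eq_or_lt with rfl | hlt
  · exact colMin_le h
  · exact (colMin_le (colMax_mem hT i')).trans (hnc _ (colMax_mem hT i') _ h hlt)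

theorem le_colMax_of_le (hT : (treeGraph a b T).Connected) (hnc : IsNoncrossing T)
    {i i' : Fin (a + 1)} {j : Fin (b + 1)} (hi : i ≤ i') (h : (i, j) ∈ T) : j ≤ colMax T i' := by
  rcases hi.eq_or_lt with rfl | hlt
  · exact le_colMax h
  · exact (hnc _ h _ (colMin_mem hT i') hlt).trans (le_colMax (colMin_mem hT i'))

theorem colMin_zero (hT : (treeGraph a b T).Connected) (hnc : IsNoncrossing T) :
    colMin T 0 = 0 := by
  obtain ⟨i, hi⟩ := exists_mem_of_snd hT 0
  exact le_antisymm (colMin_le_of_le hT hnc (Fin.zero_le i) hi) (Fin.zero_le _)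

theorem colMax_last (hT : (treeGraph a b T).Connected) (hnc : IsNoncrossing T) :
    colMax T (Fin.last a) = Fin.last b := by
  obtain ⟨i, hi⟩ := exists_mem_of_snd hT (Fin.last b)
  exact le_antisymm (Fin.le_last _) (le_colMax_of_le hT hnc (Fin.le_last i) hi)

theorem colMax_castSucc (hT : (treeGraph a b T).Connected) (hnc : IsNoncrossing T) (k : Fin a) :
    colMax T k.castSucc = colMin T k.succ := by
  refine le_antisymm (hnc _ (colMax_mem hT _) _ (colMin_mem hT _) Fin.castSucc_lt_succ) ?_
  obtain ⟨p, hp, ⟨hle, hlt⟩ | ⟨hlt, hle⟩⟩ := exists_mem_crossing hT k (colMax T k.castSucc)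
  · exact absurd (le_colMax_of_le hT hnc hle hp) (not_le.2 hlt)
  · exact (colMin_le_of_le hT hnc (Fin.castSucc_lt_iff_succ_le.1 hlt) hp).trans hle

theorem mem_iff_colMin_le_colMax (hT : (treeGraph a b T).Connected) (hnc : IsNoncrossing T)
    {i : Fin (a + 1)} {j : Fin (b + 1)} : (i, j) ∈ T ↔ colMin T i ≤ j ∧ j ≤ colMax T i := by
  refine ⟨fun h => ⟨colMin_le h, le_colMax h⟩, fun ⟨hmin, hmax⟩ => ?_⟩
  obtain ⟨i', hi'⟩ := exists_mem_of_snd hT j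
  rcases lt_trichotomy i' i with hlt | rfl | hlt
  · obtain rfl : j = colMin T i := le_antisymm (hnc _ hi' _ (colMin_mem hT i) hlt) hmin
    exact colMin_mem hT i
  · exact hi'
  · obtain rfl : j = colMax T i := le_antisymm hmax (hnc _ (colMax_mem hT i) _ hi' hlt)
    exact colMax_mem hT i

theorem eq_staircase (hT : (treeGraph a b T).Connected) (hnc : IsNoncrossing T) :
    T = staircase fun k => colMax T k.castSucc := by
  have hbottom : stairBottom (fun k => colMax T k.castSucc) = colMin T := by
    funext i
    induction i using Fin.cases with
    | zero => exact (colMin_zero hT hnc).symm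
    | succ k => exact colMax_castSucc hT hnc k
  have htop : stairTop (fun k => colMax T k.castSucc) = colMax T := by
    funext i
    induction i using Fin.lastCases with
    | last => exact (stairTop_last _).trans (colMax_last hT hnc).symm
    | cast k => exact stairTop_castSucc _ k
  ext ⟨i, j⟩
  rw [mem_staircase, hbottom, htop, mem_iff_colMin_le_colMax hT hnc]

theorem monotone_colMax_castSucc (hT : (treeGraph a b T).Connected) (hnc : IsNoncrossing T) :
    Monotone fun k : Fin a => colMax T k.castSucc := fun _ _ h =>
  le_colMax_of_le hT hnc (Fin.castSucc_le_castSucc_iff.2 h) (colMax_mem hT _)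

end Converse

theorem setOf_planar_eq_range_staircase (a b : ℕ) :
    {T : Finset (Fin (a + 1) × Fin (b + 1)) |
        (treeGraph a b T).Connected ∧ #T = a + b + 1 ∧ IsNoncrossing T}
      = Set.range fun c : {c : Fin a → Fin (b + 1) // Monotone c} => staircase c.1 := by
  ext T
  constructor
  · rintro ⟨hT, -, hnc⟩
    exact ⟨⟨_, monotone_colMax_castSucc hT hnc⟩, (eq_staircase hT hnc).symm⟩
  · rintro ⟨⟨c, hc⟩, rfl⟩
    exact ⟨connected_treeGraph_staircase hc, card_staircase hc, isNoncrossing_staircase hc⟩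

theorem stmt_14 (a b : ℕ) :
    {T : Finset (Fin (a + 1) × Fin (b + 1)) |
        (treeGraph a b T).Connected ∧ T.card = a + b + 1 ∧
          ∀ p ∈ T, ∀ q ∈ T, p.1 < q.1 → p.2 ≤ q.2}.ncard
      = (a + b).choose a := by
  calc _ = (Set.range fun c : {c : Fin a → Fin (b + 1) // Monotone c} => staircase c.1).ncard :=
        congrArg Set.ncard (setOf_planar_eq_range_staircase a b)
    _ = Nat.card {c : Fin a → Fin (b + 1) // Monotone c} :=
        Set.ncard_range_of_injective staircase_injective
    _ = (a + b).choose a := by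
        rw [Nat.card_monotone_fin, Fintype.card_fin]
        congr 1
        omega
end

section
/- Let K_{a,b} (a,b ≥ 1) be the complete bipartite graph with parts {v_1,…,v_a} and {w_1,…,w_b}. A function f : V → ℤ defines a facet of the symmetric edge polytope P_{K_{a,b}} if and only if, up to adding a constant, either f(v_i)=0 for all i and f(w_j) ∈ {-1,1} for all j, or f(w_j)=0 for all j and f(v_i) ∈ {-1,1} for all i. In particular, P_{K_{a,b}} has exactly 2^a + 2^b - 2 facets. -/
open Finset

/-- The symmetric edge polytope `P_G = conv{e_v - e_w, e_w - e_v : vw ∈ E(G)} ⊆ ℝ^V`. -/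
def symEdgePolytope (V : Type) [Fintype V] [DecidableEq V] (G : SimpleGraph V) :
    Set (V → ℝ) :=
  convexHull ℝ {x : V → ℝ | ∃ v w, G.Adj v w ∧ x = Pi.single v 1 - Pi.single w 1}

/-- `f` defines a facet of `P` via the hyperplane `{x : ∑ v, f v * x v = 1}`:
the hyperplane is valid for `P` and cuts out a nonempty face of affine dimension
`|V| - 2` (codimension one in the ambient hyperplane `∑ x_v = 0`). -/
def DefinesFacet (V : Type) [Fintype V] [DecidableEq V] (P : Set (V → ℝ)) (f : V → ℝ) :
    Prop :=
  (P ∩ {x | ∑ v, f v * x v = 1}).Nonempty ∧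
    (∀ x ∈ P, ∑ v, f v * x v ≤ 1) ∧
    Module.finrank ℝ (affineSpan ℝ (P ∩ {x | ∑ v, f v * x v = 1})).direction
      = Fintype.card V - 2

/-- The complete bipartite graph on `Fin a ⊕ Fin b`. -/
def completeBipartite (a b : ℕ) : SimpleGraph (Fin a ⊕ Fin b) :=
  SimpleGraph.fromRel (fun u v => u.isLeft ∧ v.isRight)

/-!
A valid `f` (`f v - f w ≤ 1` along every edge) cuts out the face
`conv {e_v - e_w | vw ∈ E(G), f v - f w = 1}`. The directions of this face are orthogonal to `1`
and to `f`, and they contain `e_u - e_v` whenever `u` and `v` are joined by tight edges; so the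
face has codimension two exactly when the tight edges form a connected spanning subgraph, and
otherwise the indicator of a tight component is a third orthogonal vector.

In `K_{a,b}` a connected tight subgraph forces every edge to be tight: if both sides were
nonconstant, the top level of `f` on the left together with the bottom level on the right would
be a union of tight components. All edges tight means that one side is constant and the other
differs from it by `±1`. The face only depends on the sign pattern `f(v_i) - f(w_j)`, which is
constant along columns (`2^b` patterns) or along rows (`2^a` patterns), the two constant
patterns being counted twice.
-/

open Module

theorem convexHull_inter_hyperplane_eq {E : Type*} [AddCommGroup E] [Module ℝ E] {S : Set E}
    (ℓ : E →ₗ[ℝ] ℝ) {c : ℝ} (hS : ∀ s ∈ S, ℓ s ≤ c) :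
    convexHull ℝ S ∩ {x | ℓ x = c} = convexHull ℝ {s ∈ S | ℓ s = c} := by
  classical
  refine subset_antisymm ?_ (Set.subset_inter (convexHull_mono fun s hs => hs.1)
    (convexHull_min (fun s hs => hs.2) (convex_hyperplane ℓ.isLinear c)))
  rintro x ⟨hx, hxc⟩
  obtain ⟨ι, t, w, z, hw₀, hw₁, hz, rfl⟩ := (convexHull_eq S).subset hx
  replace hxc : ∑ i ∈ t, w i * ℓ (z i) = c := by
    simpa [Finset.centerMass_eq_of_sum_1 _ _ hw₁] using hxc
  have hslack : ∑ i ∈ t, w i * (c - ℓ (z i)) = 0 := by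
    simp only [mul_sub, Finset.sum_sub_distrib, ← Finset.sum_mul, hw₁, hxc, one_mul, sub_self]
  have hzero := (Finset.sum_eq_zero_iff_of_nonneg fun i hi =>
    mul_nonneg (hw₀ i hi) (sub_nonneg.2 (hS _ (hz i hi)))).1 hslack
  rw [← Finset.centerMass_filter_ne_zero]
  refine Finset.centerMass_mem_convexHull _ (fun i hi => hw₀ i (Finset.mem_filter.1 hi).1)
    (by rw [Finset.sum_filter_ne_zero, hw₁]; exact one_pos) fun i hi => ?_
  obtain ⟨hit, hwi⟩ := Finset.mem_filter.1 hi
  exact ⟨hz i hit, by linarith [(mul_eq_zero.1 (hzero i hit)).resolve_left hwi]⟩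

theorem finrank_vectorSpan_add_card_le {K V ι : Type*} [Field K] [Fintype V] [Fintype ι]
    {T : Set (V → K)} {u : ι → V → K} (hu : LinearIndependent K u) (c : ι → K)
    (hT : ∀ t ∈ T, ∀ i, u i ⬝ᵥ t = c i) :
    finrank K (vectorSpan K T) + Fintype.card ι ≤ Fintype.card V := by
  have hker : vectorSpan K T ≤ LinearMap.ker (Matrix.of u).mulVecLin := by
    rw [vectorSpan_def, Submodule.span_le]
    rintro _ ⟨t, ht, t', ht', rfl⟩
    ext i
    simp [Matrix.mulVec, hT t ht, hT t' ht']
  have hrank := LinearMap.finrank_range_add_finrank_ker (Matrix.of u).mulVecLin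
  rw [← Matrix.rank, LinearIndependent.rank_matrix (M := Matrix.of u) hu,
    finrank_fintype_fun_eq_card] at hrank
  linarith [Submodule.finrank_mono hker]

theorem finrank_span_le_finrank_vectorSpan_add_one {K E : Type*} [Field K] [AddCommGroup E]
    [Module K E] (T : Set E) :
    finrank K (Submodule.span K T) ≤ finrank K (vectorSpan K T) + 1 := by
  have h := vectorSpan_eq_span_vsub_set_right K (Set.mem_insert (0 : E) T)
  simp only [vsub_eq_sub, sub_zero, Set.image_id', Submodule.span_insert_zero] at h
  rw [← h]
  exact finrank_vectorSpan_insert_le_set K T 0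

theorem card_le_finrank_vectorSpan_add_two {K V : Type*} [Field K] [Fintype V] [DecidableEq V]
    {T : Set (V → K)} (hT : ∀ u v, Pi.single u 1 - Pi.single v 1 ∈ Submodule.span K T) :
    Fintype.card V ≤ finrank K (vectorSpan K T) + 2 := by
  let σ := dotProductEquiv K V 1
  have hker : LinearMap.ker σ ≤ Submodule.span K T := by
    intro x hx
    cases isEmpty_or_nonempty V
    · simp [Subsingleton.elim x 0]
    obtain ⟨v₀⟩ := ‹Nonempty V›
    have hsum : ∑ v, x v = 0 := by simpa [σ, dotProduct] using hx
    have hx : ∑ v, x v • (Pi.single v 1 - Pi.single v₀ 1) = x := by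
      simp only [smul_sub, Finset.sum_sub_distrib, ← Finset.sum_smul, hsum, zero_smul, sub_zero]
      ext w
      simp [Finset.sum_apply, Pi.single_apply]
    rw [← hx]
    exact Submodule.sum_mem _ fun v _ => Submodule.smul_mem _ _ (hT v v₀)
  have hrank := LinearMap.finrank_range_add_finrank_ker σ
  have hrange : finrank K (LinearMap.range σ) ≤ 1 :=
    (Submodule.finrank_le _).trans (finrank_self K).le
  rw [finrank_fintype_fun_eq_card] at hrank
  linarith [Submodule.finrank_mono hker, finrank_span_le_finrank_vectorSpan_add_one (K := K) T]

theorem SimpleGraph.Reachable.eq_of_forall_adj_eq {V β : Type*} {G : SimpleGraph V} {g : V → β}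
    (hg : ∀ v w, G.Adj v w → g v = g w) {u v : V} (h : G.Reachable u v) : g u = g v := by
  rw [SimpleGraph.reachable_iff_reflTransGen] at h
  induction h with
  | refl => rfl
  | tail _ hadj ih => exact ih.trans (hg _ _ hadj)

theorem SimpleGraph.Reachable.sub_mem {V R M : Type*} [Ring R] [AddCommGroup M] [Module R M]
    {G : SimpleGraph V} {e : V → M} {U : Submodule R M}
    (hU : ∀ v w, G.Adj v w → e v - e w ∈ U) {u v : V} (h : G.Reachable u v) :
    e u - e v ∈ U :=
  (Submodule.Quotient.eq U).1 <|
    h.eq_of_forall_adj_eq (g := fun v => U.mkQ (e v)) fun v w hvw =>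
      (Submodule.Quotient.eq U).2 (hU v w hvw)

theorem linearIndependent_one_fun_of_ne {K V : Type*} [Field K] {f : V → K} {v w : V}
    (hf : f v ≠ f w) : LinearIndependent K ![1, f] := by
  rw [LinearIndependent.pair_iff]
  intro s t hst
  have e : ∀ u, s + t * f u = 0 := fun u => by simpa using congrFun hst u
  have ht : t = 0 := by
    have : t * (f v - f w) = 0 := by linear_combination e v - e w
    exact (mul_eq_zero.1 this).resolve_right (sub_ne_zero.2 hf)
  exact ⟨by simpa [ht] using e v, ht⟩

theorem linearIndependent_one_fun_fun_of_ne {K V : Type*} [Field K] {f g : V → K} {v w x y : V}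
    (hf : f v ≠ f w) (hg : g v = g w) (hxy : g x ≠ g y) : LinearIndependent K ![1, f, g] := by
  rw [Fintype.linearIndependent_iff]
  intro c hc
  have e : ∀ u, c 0 + c 1 * f u + c 2 * g u = 0 := fun u => by
    simpa [Fin.sum_univ_three] using congrFun hc u
  have h1 : c 1 = 0 := by
    have : c 1 * (f v - f w) = 0 := by linear_combination e v - e w - c 2 * hg
    exact (mul_eq_zero.1 this).resolve_right (sub_ne_zero.2 hf)
  have h2 : c 2 = 0 := by
    have : c 2 * (g x - g y) = 0 := by linear_combination e x - e y - (f x - f y) * h1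
    exact (mul_eq_zero.1 this).resolve_right (sub_ne_zero.2 hxy)
  have h0 : c 0 = 0 := by simpa [h1, h2] using e v
  intro i
  fin_cases i <;> assumption

section SymEdgePolytope

variable {V : Type} {G : SimpleGraph V} {f : V → ℝ}

def tightGraph (G : SimpleGraph V) (f : V → ℝ) : SimpleGraph V where
  Adj v w := G.Adj v w ∧ |f v - f w| = 1
  symm := ⟨fun v w h => ⟨h.1.symm, by rw [abs_sub_comm]; exact h.2⟩⟩
  loopless := ⟨fun v h => G.loopless.irrefl v h.1⟩

@[simp]
theorem tightGraph_adj {v w : V} : (tightGraph G f).Adj v w ↔ G.Adj v w ∧ |f v - f w| = 1 :=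
  .rfl

variable [Fintype V] [DecidableEq V]

def tightEdgeVectors (G : SimpleGraph V) (f : V → ℝ) : Set (V → ℝ) :=
  {x | ∃ v w, G.Adj v w ∧ f v - f w = 1 ∧ x = Pi.single v 1 - Pi.single w 1}

theorem dotProduct_single_sub_single {R : Type*} [CommRing R] (f : V → R) (v w : V) :
    f ⬝ᵥ (Pi.single v 1 - Pi.single w 1) = f v - f w := by
  simp [dotProduct_sub]

theorem single_sub_single_mem_symEdgePolytope {v w : V} (h : G.Adj v w) :
    Pi.single v 1 - Pi.single w 1 ∈ symEdgePolytope V G :=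
  subset_convexHull ℝ _ ⟨v, w, h, rfl⟩

theorem forall_dotProduct_le_one_iff :
    (∀ x ∈ symEdgePolytope V G, f ⬝ᵥ x ≤ 1) ↔
      ∀ v w, G.Adj v w → f v - f w ≤ 1 := by
  refine ⟨fun h v w hvw => ?_, fun h => convexHull_min ?_ ?_⟩
  · simpa [dotProduct_single_sub_single] using h _ (single_sub_single_mem_symEdgePolytope hvw)
  · rintro _ ⟨v, w, hvw, rfl⟩
    show f ⬝ᵥ _ ≤ 1
    simpa [dotProduct_single_sub_single] using h v w hvw
  · exact convex_halfSpace_le (dotProductEquiv ℝ V f).isLinear 1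

theorem symEdgePolytope_inter_eq_convexHull (hf : ∀ v w, G.Adj v w → f v - f w ≤ 1) :
    symEdgePolytope V G ∩ {x | ∑ v, f v * x v = 1} = convexHull ℝ (tightEdgeVectors G f) := by
  refine (convexHull_inter_hyperplane_eq (dotProductEquiv ℝ V f) (c := 1) ?_).trans ?_
  · rintro _ ⟨v, w, hvw, rfl⟩
    simpa [dotProduct_single_sub_single] using hf v w hvw
  · congr 1
    ext x
    constructor
    · rintro ⟨⟨v, w, hvw, rfl⟩, h⟩
      exact ⟨v, w, hvw, by simpa [dotProduct_single_sub_single] using h, rfl⟩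
    · rintro ⟨v, w, hvw, h, rfl⟩
      exact ⟨⟨v, w, hvw, rfl⟩, by simpa [dotProduct_single_sub_single] using h⟩

theorem symEdgePolytope_inter_congr {f' : V → ℝ}
    (h : ∀ v w, G.Adj v w → f v - f w = f' v - f' w) :
    symEdgePolytope V G ∩ {x | ∑ v, f v * x v = 1}
      = symEdgePolytope V G ∩ {x | ∑ v, f' v * x v = 1} := by
  have hP : symEdgePolytope V G ⊆ {x | (f - f') ⬝ᵥ x = 0} := by
    refine convexHull_min ?_ (convex_hyperplane (dotProductEquiv ℝ V (f - f')).isLinear 0)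
    rintro _ ⟨v, w, hvw, rfl⟩
    simp [h v w hvw]
  ext x
  refine and_congr_right fun hx => ?_
  have : f ⬝ᵥ x = f' ⬝ᵥ x := sub_eq_zero.1 ((sub_dotProduct f f' x).symm.trans (hP hx))
  exact Eq.congr_left this

theorem single_sub_single_mem_inter_iff {v w : V} (h : G.Adj v w) :
    Pi.single v 1 - Pi.single w 1 ∈ symEdgePolytope V G ∩ {x | ∑ u, f u * x u = 1} ↔
      f v - f w = 1 := by
  rw [← dotProduct_single_sub_single]
  exact and_iff_right (single_sub_single_mem_symEdgePolytope h)

theorem connected_tightGraph_of_definesFacet (hf : DefinesFacet V (symEdgePolytope V G) f) :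
    (tightGraph G f).Connected := by
  classical
  obtain ⟨hne, hle, hdim⟩ := hf
  have hvalid := forall_dotProduct_le_one_iff.1 hle
  rw [symEdgePolytope_inter_eq_convexHull hvalid] at hne hdim
  rw [affineSpan_convexHull, direction_affineSpan] at hdim
  obtain ⟨_, v₀, w₀, hadj₀, htight₀, rfl⟩ := convexHull_nonempty_iff.1 hne
  have : Nonempty V := ⟨v₀⟩
  refine ⟨fun u v => ?_⟩
  by_contra huv
  -- the indicator of the tight component of `u` is a third linear condition on the face
  let g : V → ℝ := fun w => if (tightGraph G f).Reachable u w then 1 else 0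
  have hg : ∀ v w, (tightGraph G f).Adj v w → g v = g w := fun v w h => by
    have : (tightGraph G f).Reachable u v ↔ (tightGraph G f).Reachable u w :=
      ⟨fun r => r.trans h.reachable, fun r => r.trans h.symm.reachable⟩
    simp only [g, this]
  have hind : LinearIndependent ℝ ![1, f, g] :=
    linearIndependent_one_fun_fun_of_ne (v := v₀) (w := w₀) (x := u) (y := v)
      (by linarith) (hg v₀ w₀ ⟨hadj₀, by simp [htight₀]⟩) (by simp [g, huv])
  have hbound := finrank_vectorSpan_add_card_le (T := tightEdgeVectors G f) hind ![0, 1, 0] <| by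
    rintro _ ⟨v, w, hvw, h1, rfl⟩ i
    fin_cases i <;> simp [h1, hg v w ⟨hvw, by simp [h1]⟩]
  simp only [Fintype.card_fin] at hbound
  omega

theorem definesFacet_of_connected_tightGraph [Nontrivial V]
    (hvalid : ∀ v w, G.Adj v w → f v - f w ≤ 1)
    (hconn : (tightGraph G f).Connected) : DefinesFacet V (symEdgePolytope V G) f := by
  obtain ⟨v₀⟩ := hconn.nonempty
  obtain ⟨w₀, hadj₀, habs₀⟩ := hconn.preconnected.exists_adj_of_nontrivial v₀
  have hT : (tightEdgeVectors G f).Nonempty := by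
    rcases (abs_eq zero_le_one).1 habs₀ with h | h
    · exact ⟨_, v₀, w₀, hadj₀, h, rfl⟩
    · exact ⟨_, w₀, v₀, hadj₀.symm, by linarith, rfl⟩
  have hspan : ∀ v w, (tightGraph G f).Adj v w →
      Pi.single v 1 - Pi.single w 1 ∈ Submodule.span ℝ (tightEdgeVectors G f) := by
    rintro v w ⟨hvw, habs⟩
    rcases (abs_eq zero_le_one).1 habs with h | h
    · exact Submodule.subset_span ⟨v, w, hvw, h, rfl⟩
    · rw [← neg_sub]
      exact neg_mem (Submodule.subset_span ⟨w, v, hvw.symm, by linarith, rfl⟩)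
  refine ⟨?_, forall_dotProduct_le_one_iff.2 hvalid, ?_⟩
  · rw [symEdgePolytope_inter_eq_convexHull hvalid]
    exact hT.convexHull
  · rw [symEdgePolytope_inter_eq_convexHull hvalid, affineSpan_convexHull, direction_affineSpan]
    have hind : LinearIndependent ℝ ![1, f] :=
      linearIndependent_one_fun_of_ne (v := v₀) (w := w₀) fun h => by simp [h] at habs₀
    have hupper := finrank_vectorSpan_add_card_le (T := tightEdgeVectors G f) hind ![0, 1] <| by
      rintro _ ⟨v, w, hvw, h1, rfl⟩ i
      fin_cases i <;> simp [h1]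
    have hlower := card_le_finrank_vectorSpan_add_two fun u v =>
      (hconn.preconnected u v).sub_mem (e := fun v => Pi.single v 1) hspan
    simp only [Fintype.card_fin] at hupper
    omega

theorem definesFacet_symEdgePolytope_iff [Nontrivial V] :
    DefinesFacet V (symEdgePolytope V G) f ↔
      (∀ v w, G.Adj v w → f v - f w ≤ 1) ∧ (tightGraph G f).Connected :=
  ⟨fun hf => ⟨forall_dotProduct_le_one_iff.1 hf.2.1, connected_tightGraph_of_definesFacet hf⟩,
    fun h => definesFacet_of_connected_tightGraph h.1 h.2⟩

end SymEdgePolytope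

theorem add_eq_zero_of_abs_eq_one {R : Type*} [CommRing R] [LinearOrder R] [IsStrictOrderedRing R]
    {x y : R} (hx : |x| = 1) (hy : |y| = 1) (hxy : x ≠ y) : x + y = 0 := by
  rcases (abs_eq zero_le_one).1 hx with rfl | rfl <;>
    rcases (abs_eq zero_le_one).1 hy with rfl | rfl <;> simp_all

theorem forall_abs_sub_eq_one_iff {R : Type*} [CommRing R] [LinearOrder R] [IsStrictOrderedRing R]
    {ι κ : Type*} [Nonempty ι] [Nonempty κ] (p : ι → R) (q : κ → R) :
    (∀ i j, |p i - q j| = 1) ↔ ∃ k : R,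
      ((∀ i, p i = k) ∧ ∀ j, q j = k - 1 ∨ q j = k + 1) ∨
        ((∀ j, q j = k) ∧ ∀ i, p i = k - 1 ∨ p i = k + 1) := by
  constructor
  · intro h
    obtain ⟨i₀⟩ := ‹Nonempty ι›
    obtain ⟨j₀⟩ := ‹Nonempty κ›
    by_cases hp : ∀ i, p i = p i₀
    · refine ⟨p i₀, .inl ⟨hp, fun j => ?_⟩⟩
      rcases (abs_eq zero_le_one).1 (h i₀ j) with h' | h'
      exacts [.inl (by linarith), .inr (by linarith)]
    obtain ⟨i₁, hi₁⟩ := not_forall.1 hp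
    -- `q j` is the midpoint of the distinct values `p i₀` and `p i₁`
    have hq : ∀ j, q j = q j₀ := fun j => by
      have h₁ := add_eq_zero_of_abs_eq_one (h i₁ j) (h i₀ j) fun _ => hi₁ (by linarith)
      have h₂ :=
        add_eq_zero_of_abs_eq_one (h i₁ j₀) (h i₀ j₀) fun _ => hi₁ (by linarith)
      linarith
    refine ⟨q j₀, .inr ⟨hq, fun i => ?_⟩⟩
    rcases (abs_eq zero_le_one).1 (h i j₀) with h' | h'
    exacts [.inr (by linarith), .inl (by linarith)]
  · rintro ⟨k, ⟨hp, hq⟩ | ⟨hq, hp⟩⟩ i j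
    · rcases hq j with h | h <;> simp [hp i, h]
    · rcases hp i with h | h <;> simp [hq j, h]

theorem Set.ncard_image_eq_ncard_image {α β γ : Type*} [Nonempty α] {s : Set α} {f : α → β}
    {g : α → γ} (h : ∀ x ∈ s, ∀ y ∈ s, f x = f y ↔ g x = g y) :
    (f '' s).ncard = (g '' s).ncard := by
  set k := Function.invFunOn f s
  have hk : ∀ x ∈ s, k (f x) ∈ s ∧ f (k (f x)) = f x := fun x hx =>
    ⟨Function.invFunOn_mem ⟨x, hx, rfl⟩, Function.invFunOn_eq ⟨x, hx, rfl⟩⟩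
  have himage : g '' s = (g ∘ k) '' (f '' s) := by
    ext z
    constructor
    · rintro ⟨x, hx, rfl⟩
      exact ⟨f x, ⟨x, hx, rfl⟩, (h _ (hk x hx).1 x hx).1 (hk x hx).2⟩
    · rintro ⟨_, ⟨x, hx, rfl⟩, rfl⟩
      exact ⟨k (f x), (hk x hx).1, rfl⟩
  rw [himage]
  refine (Set.InjOn.ncard_image ?_).symm
  rintro _ ⟨x, hx, rfl⟩ _ ⟨y, hy, rfl⟩ hxy
  rw [← (hk x hx).2, ← (hk y hy).2]
  exact (h _ (hk x hx).1 _ (hk y hy).1).2 hxy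

section Signs

variable {ι κ : Type*} [DecidableEq ι] [DecidableEq κ]

def signs (Q : Finset κ) (j : κ) : ℝ := if j ∈ Q then 1 else -1

theorem abs_signs (Q : Finset κ) (j : κ) : |signs Q j| = 1 := by
  unfold signs
  split_ifs <;> simp

theorem signs_injective : Function.Injective (signs : Finset κ → κ → ℝ) := by
  intro Q Q' h
  ext j
  have := congrFun h j
  unfold signs at this
  split_ifs at this <;> norm_num at this <;> simp_all

def colSigns (ι : Type*) (Q : Finset κ) : ι → κ → ℝ := fun _ => signs Q

def rowSigns (κ : Type*) (Q : Finset ι) : ι → κ → ℝ := fun i _ => signs Q i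

variable [Fintype ι] [Fintype κ] [Nonempty ι] [Nonempty κ]

theorem ncard_range_colSigns_union_range_rowSigns :
    (Set.range (colSigns ι (κ := κ)) ∪ Set.range (rowSigns κ (ι := ι))).ncard
      = 2 ^ Fintype.card ι + 2 ^ Fintype.card κ - 2 := by
  obtain ⟨i₀⟩ := ‹Nonempty ι›
  obtain ⟨j₀⟩ := ‹Nonempty κ›
  have hcols : Function.Injective (colSigns ι (κ := κ)) :=
    fun Q Q' h => signs_injective (congrFun h i₀)
  have hrows : Function.Injective (rowSigns κ (ι := ι)) :=
    fun Q Q' h => signs_injective (funext fun i => congrFun (congrFun h i) j₀)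
  have hconst : Set.range (colSigns ι (κ := κ)) ∩ Set.range (rowSigns κ (ι := ι))
      = {fun _ _ => 1, fun _ _ => -1} := by
    ext D
    constructor
    · rintro ⟨⟨Q, rfl⟩, ⟨Q', hQ'⟩⟩
      have hQ : ∀ j, signs Q j = signs Q' i₀ := fun j => (congrFun (congrFun hQ' i₀) j).symm
      rcases (abs_eq zero_le_one).1 (abs_signs Q' i₀) with h | h
      exacts [.inl (funext₂ fun _ j => (hQ j).trans h),
        .inr (funext₂ fun _ j => (hQ j).trans h)]
    · rintro (rfl | rfl)
      exacts [⟨⟨Finset.univ, by ext; simp [colSigns, signs]⟩,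
          ⟨Finset.univ, by ext; simp [rowSigns, signs]⟩⟩,
        ⟨⟨∅, by ext; simp [colSigns, signs]⟩, ⟨∅, by ext; simp [rowSigns, signs]⟩⟩]
  have hne : (fun (_ : ι) (_ : κ) => (1 : ℝ)) ≠ fun _ _ => -1 := fun h => by
    have := congrFun (congrFun h i₀) j₀
    norm_num at this
  have hcount := Set.ncard_union_add_ncard_inter (Set.range (colSigns ι (κ := κ)))
    (Set.range (rowSigns κ (ι := ι)))
  rw [hconst, Set.ncard_pair hne, Set.ncard_range_of_injective hcols,
    Set.ncard_range_of_injective hrows, Nat.card_eq_fintype_card, Nat.card_eq_fintype_card,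
    Fintype.card_finset, Fintype.card_finset] at hcount
  have := Nat.le_self_pow (Fintype.card_ne_zero (α := ι)) 2
  have := Nat.le_self_pow (Fintype.card_ne_zero (α := κ)) 2
  omega

end Signs

section CompleteBipartite

open Sum

variable {a b : ℕ} {f : Fin a ⊕ Fin b → ℝ}

@[simp]
theorem completeBipartite_adj_inl_inr (i : Fin a) (j : Fin b) :
    (completeBipartite a b).Adj (inl i) (inr j) := by
  simp [completeBipartite]

@[simp]
theorem completeBipartite_adj_inr_inl (i : Fin a) (j : Fin b) :
    (completeBipartite a b).Adj (inr j) (inl i) := by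
  simp [completeBipartite]

@[simp]
theorem not_completeBipartite_adj_inl_inl (i i' : Fin a) :
    ¬ (completeBipartite a b).Adj (inl i) (inl i') := by
  simp [completeBipartite]

@[simp]
theorem not_completeBipartite_adj_inr_inr (j j' : Fin b) :
    ¬ (completeBipartite a b).Adj (inr j) (inr j') := by
  simp [completeBipartite]

theorem completeBipartite_connected [NeZero a] [NeZero b] : (completeBipartite a b).Connected := by
  have h : ∀ v, (completeBipartite a b).Reachable (inl 0) v := by
    rintro (i | j)
    · exact (completeBipartite_adj_inl_inr 0 0).reachable.trans
        (completeBipartite_adj_inr_inl i 0).reachable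
    · exact (completeBipartite_adj_inl_inr 0 j).reachable
  exact ⟨fun u v => (h u).symm.trans (h v)⟩

theorem left_const_or_right_const_of_connected
    (hvalid : ∀ v w, (completeBipartite a b).Adj v w → f v - f w ≤ 1)
    (hconn : (tightGraph (completeBipartite a b) f).Connected) :
    (∀ i i', f (inl i) = f (inl i')) ∨ ∀ j j', f (inr j) = f (inr j') := by
  by_contra! ⟨⟨i₁, i₂, hi⟩, ⟨j₁, j₂, hj⟩⟩
  have : Nonempty (Fin a) := ⟨i₁⟩
  have : Nonempty (Fin b) := ⟨j₁⟩
  obtain ⟨iM, hiM⟩ := Finite.exists_max fun i => f (inl i)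
  obtain ⟨jm, hjm⟩ := Finite.exists_min fun j => f (inr j)
  obtain ⟨i', hi'⟩ : ∃ i, f (inl i) < f (inl iM) := by
    by_contra! h
    exact hi ((le_antisymm (hiM i₁) (h i₁)).trans (le_antisymm (hiM i₂) (h i₂)).symm)
  obtain ⟨j', hj'⟩ : ∃ j, f (inr jm) < f (inr j) := by
    by_contra! h
    exact hj ((le_antisymm (h j₁) (hjm j₁)).trans (le_antisymm (h j₂) (hjm j₂)).symm)
  -- tight edges either join the top level on the left to the bottom level on the right,
  -- or avoid both levels
  have hlevel : ∀ i j, |f (inl i) - f (inr j)| = 1 →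
      (f (inl i) = f (inl iM) ↔ f (inr j) = f (inr jm)) := by
    intro i j h
    have := hiM i
    have := hjm j
    rcases (abs_eq zero_le_one).1 h with h | h
    · have := hvalid _ _ (completeBipartite_adj_inl_inr iM jm)
      constructor <;> intro <;> linarith
    · have := hvalid _ _ (completeBipartite_adj_inr_inl i' j)
      have := hvalid _ _ (completeBipartite_adj_inr_inl i j')
      constructor <;> intro <;> linarith
  let g : Fin a ⊕ Fin b → ℝ := Sum.elim (fun i => if f (inl i) = f (inl iM) then 1 else 0)
    (fun j => if f (inr j) = f (inr jm) then 1 else 0)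
  have hcross : ∀ i j, (tightGraph (completeBipartite a b) f).Adj (inl i) (inr j) →
      g (inl i) = g (inr j) :=
    fun i j h => by simp [g, hlevel i j h.2]
  have hg : ∀ v w, (tightGraph (completeBipartite a b) f).Adj v w → g v = g w := by
    rintro (i | j) (i | j) h
    · simp at h
    · exact hcross i j h
    · exact (hcross i j h.symm).symm
    · simp at h
  have := (hconn.preconnected (inl iM) (inl i')).eq_of_forall_adj_eq hg
  simp [g, hi'.ne] at this

theorem forall_abs_sub_eq_one_of_connected
    (hvalid : ∀ v w, (completeBipartite a b).Adj v w → f v - f w ≤ 1)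
    (hconn : (tightGraph (completeBipartite a b) f).Connected) (i : Fin a) (j : Fin b) :
    |f (inl i) - f (inr j)| = 1 := by
  have : Nontrivial (Fin a ⊕ Fin b) := ⟨⟨inl i, inr j, inl_ne_inr⟩⟩
  rcases left_const_or_right_const_of_connected hvalid hconn with hp | hq
  · obtain ⟨i' | j', hadj, habs⟩ := hconn.preconnected.exists_adj_of_nontrivial (inr j)
    · rwa [abs_sub_comm, hp i'] at habs
    · simp at hadj
  · obtain ⟨i' | j', hadj, habs⟩ := hconn.preconnected.exists_adj_of_nontrivial (inl i)
    · simp at hadj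
    · rwa [hq j'] at habs

theorem definesFacet_completeBipartite_iff [NeZero a] [NeZero b] :
    DefinesFacet (Fin a ⊕ Fin b) (symEdgePolytope (Fin a ⊕ Fin b) (completeBipartite a b)) f ↔
      ∀ i j, |f (inl i) - f (inr j)| = 1 := by
  have : Nontrivial (Fin a ⊕ Fin b) := ⟨⟨inl 0, inr 0, inl_ne_inr⟩⟩
  rw [definesFacet_symEdgePolytope_iff]
  refine ⟨fun h => forall_abs_sub_eq_one_of_connected h.1 h.2, fun h => ⟨?_, ?_⟩⟩
  · rintro (i | j) (i' | j') hadj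
    · simp at hadj
    · exact (le_abs_self _).trans (h i j').le
    · exact (le_abs_self _).trans (abs_sub_comm (f (inr j)) _ ▸ (h i' j).le)
    · simp at hadj
  · have : tightGraph (completeBipartite a b) f = completeBipartite a b := by
      ext (i | j) (i' | j')
      · simp
      · simp [h]
      · simp [abs_sub_comm (f (inr j)), h]
      · simp
    rw [this]
    exact completeBipartite_connected

def crossDiff (f : Fin a ⊕ Fin b → ℝ) (i : Fin a) (j : Fin b) : ℝ := f (inl i) - f (inr j)

theorem symEdgePolytope_inter_eq_inter_iff {f' : Fin a ⊕ Fin b → ℝ}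
    (hf : ∀ i j, |crossDiff f i j| = 1) (hf' : ∀ i j, |crossDiff f' i j| = 1) :
    symEdgePolytope _ (completeBipartite a b) ∩ {x | ∑ v, f v * x v = 1}
        = symEdgePolytope _ (completeBipartite a b) ∩ {x | ∑ v, f' v * x v = 1} ↔
      crossDiff f = crossDiff f' := by
  constructor
  · intro h
    funext i j
    have hmem := single_sub_single_mem_inter_iff (f := f) (completeBipartite_adj_inl_inr i j)
    rw [h, single_sub_single_mem_inter_iff (completeBipartite_adj_inl_inr i j)] at hmem
    rcases (abs_eq zero_le_one).1 (hf i j) with h₁ | h₁ <;>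
      rcases (abs_eq zero_le_one).1 (hf' i j) with h₂ | h₂ <;>
      simp_all [crossDiff]
  · intro h
    apply symEdgePolytope_inter_congr
    rintro (i | j) (i' | j') hadj
    · simp at hadj
    · exact congrFun₂ h i j'
    · have := congrFun₂ h i' j
      simp only [crossDiff] at this
      linarith
    · simp at hadj

theorem crossDiff_image_eq [NeZero a] [NeZero b] :
    crossDiff '' {f | ∀ i j, |crossDiff f i j| = 1}
      = Set.range (colSigns (Fin a) (κ := Fin b)) ∪
          Set.range (rowSigns (Fin b) (ι := Fin a)) := by
  ext D
  constructor
  · rintro ⟨f, hf, rfl⟩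
    obtain ⟨k, ⟨hp, hq⟩ | ⟨hq, hp⟩⟩ :=
      (forall_abs_sub_eq_one_iff (fun i => f (inl i)) (fun j => f (inr j))).1 hf
    · refine .inl ⟨Finset.univ.filter fun j => f (inr j) = k - 1, funext₂ fun i j => ?_⟩
      rcases hq j with h | h <;> simp [colSigns, signs, crossDiff, hp i, h]
      intro; linarith
    · refine .inr ⟨Finset.univ.filter fun i => f (inl i) = k + 1, funext₂ fun i j => ?_⟩
      rcases hp i with h | h <;> simp [rowSigns, signs, crossDiff, hq j, h]
      intro; linarith
  · rintro (⟨Q, rfl⟩ | ⟨Q, rfl⟩)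
    · have hD : crossDiff (Sum.elim 0 (-signs Q)) = colSigns (Fin a) Q := by
        funext i j; simp [crossDiff, colSigns]
      exact ⟨_, fun i j => by rw [hD]; exact abs_signs Q j, hD⟩
    · have hD : crossDiff (Sum.elim (signs Q) 0) = rowSigns (Fin b) Q := by
        funext i j; simp [crossDiff, rowSigns]
      exact ⟨_, fun i j => by rw [hD]; exact abs_signs Q i, hD⟩

theorem ncard_facets_completeBipartite [NeZero a] [NeZero b] :
    {F : Set (Fin a ⊕ Fin b → ℝ) |
        ∃ f : Fin a ⊕ Fin b → ℝ,
          DefinesFacet (Fin a ⊕ Fin b)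
            (symEdgePolytope (Fin a ⊕ Fin b) (completeBipartite a b)) f ∧
          F = symEdgePolytope (Fin a ⊕ Fin b) (completeBipartite a b)
            ∩ {x | ∑ v, f v * x v = 1}}.ncard
      = 2 ^ a + 2 ^ b - 2 := by
  have hfacets : {F : Set (Fin a ⊕ Fin b → ℝ) |
        ∃ f : Fin a ⊕ Fin b → ℝ,
          DefinesFacet (Fin a ⊕ Fin b)
            (symEdgePolytope (Fin a ⊕ Fin b) (completeBipartite a b)) f ∧
          F = symEdgePolytope (Fin a ⊕ Fin b) (completeBipartite a b)
            ∩ {x | ∑ v, f v * x v = 1}} =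
      (fun f => symEdgePolytope (Fin a ⊕ Fin b) (completeBipartite a b)
        ∩ {x | ∑ v, f v * x v = 1}) '' {f | ∀ i j, |crossDiff f i j| = 1} := by
    ext F
    simp only [definesFacet_completeBipartite_iff]
    constructor <;> rintro ⟨f, hf, rfl⟩ <;> exact ⟨f, hf, rfl⟩
  rw [hfacets, Set.ncard_image_eq_ncard_image (s := {f | ∀ i j, |crossDiff f i j| = 1})
      (g := crossDiff) fun f hf f' hf' => symEdgePolytope_inter_eq_inter_iff hf hf',
    crossDiff_image_eq,
    ncard_range_colSigns_union_range_rowSigns, Fintype.card_fin, Fintype.card_fin]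

end CompleteBipartite

theorem stmt_16 (a b : ℕ) (ha : 1 ≤ a) (hb : 1 ≤ b) :
    (∀ f : Fin a ⊕ Fin b → ℤ,
        DefinesFacet (Fin a ⊕ Fin b)
            (symEdgePolytope (Fin a ⊕ Fin b) (completeBipartite a b)) (fun v => (f v : ℝ))
          ↔ ∃ k : ℤ,
              ((∀ i : Fin a, f (Sum.inl i) = k) ∧
                  ∀ j : Fin b, f (Sum.inr j) = k - 1 ∨ f (Sum.inr j) = k + 1) ∨
              ((∀ j : Fin b, f (Sum.inr j) = k) ∧
                  ∀ i : Fin a, f (Sum.inl i) = k - 1 ∨ f (Sum.inl i) = k + 1)) ∧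
      {F : Set (Fin a ⊕ Fin b → ℝ) |
          ∃ f : Fin a ⊕ Fin b → ℝ,
            DefinesFacet (Fin a ⊕ Fin b)
              (symEdgePolytope (Fin a ⊕ Fin b) (completeBipartite a b)) f ∧
            F = symEdgePolytope (Fin a ⊕ Fin b) (completeBipartite a b)
              ∩ {x | ∑ v, f v * x v = 1}}.ncard
        = 2 ^ a + 2 ^ b - 2 := by
  have : NeZero a := ⟨by omega⟩
  have : NeZero b := ⟨by omega⟩
  refine ⟨fun f => ?_, ncard_facets_completeBipartite⟩
  have hcast : ∀ x y : ℤ, |(x : ℝ) - y| = 1 ↔ |x - y| = 1 := fun x y => by norm_cast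
  rw [definesFacet_completeBipartite_iff]
  simp only [hcast]
  exact forall_abs_sub_eq_one_iff (fun i => f (Sum.inl i)) (fun j => f (Sum.inr j))
end

section
/- For all natural numbers a, b, the coefficient sequence of h_{a,b}(t) = Σ_{i=0}^{min(a,b)} C(2i,i)·C(a,i)·C(b,i)·t^i·(1+t)^{a+b+1-2i} is unimodal: there exists an index m such that the coefficients weakly increase up to position m and weakly decrease afterwards. -/
/-!
Every summand `tⁱ (1 + t)^(a+b+1-2i)` of `h_{a,b}` is a shifted row of Pascal's triangle whose
centre is `(a + b + 1) / 2`, independently of `i`. So all summands have coefficients increasing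
up to `⌊(a + b + 1) / 2⌋` and decreasing afterwards, and so does their nonnegative combination.
-/

open Polynomial Finset

namespace Nat

theorem choose_le_choose_succ_of_two_mul_add_two_le {n r : ℕ} (h : 2 * r + 2 ≤ n) :
    n.choose r ≤ n.choose (r + 1) := by
  refine Nat.le_of_mul_le_mul_right ?_ (Nat.succ_pos r)
  rw [choose_succ_right_eq]
  exact Nat.mul_le_mul_left _ (by omega)

theorem choose_succ_le_choose_of_le_two_mul_add_one {n r : ℕ} (h : n ≤ 2 * r + 1) :
    n.choose (r + 1) ≤ n.choose r := by
  refine Nat.le_of_mul_le_mul_right ?_ (Nat.succ_pos r)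
  rw [choose_succ_right_eq]
  exact Nat.mul_le_mul_left _ (by omega)

end Nat

namespace Polynomial

variable {R : Type*} [Semiring R]

theorem coeff_X_pow_mul_one_add_X_pow (i n k : ℕ) :
    ((X : R[X]) ^ i * (1 + X) ^ n).coeff k = if i ≤ k then (n.choose (k - i) : R) else 0 := by
  rw [coeff_X_pow_mul', coeff_one_add_X_pow]

variable [PartialOrder R] [IsOrderedRing R]

theorem coeff_X_pow_mul_one_add_X_pow_le_coeff_succ {i n k : ℕ} (h : 2 * k + 2 ≤ 2 * i + n) :
    ((X : R[X]) ^ i * (1 + X) ^ n).coeff k ≤ ((X : R[X]) ^ i * (1 + X) ^ n).coeff (k + 1) := by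
  simp only [coeff_X_pow_mul_one_add_X_pow]
  by_cases hik : i ≤ k
  · rw [if_pos hik, if_pos (by omega), Nat.sub_add_comm hik]
    exact Nat.mono_cast (Nat.choose_le_choose_succ_of_two_mul_add_two_le (by omega))
  · rw [if_neg hik]
    split_ifs <;> simp

theorem coeff_X_pow_mul_one_add_X_pow_succ_le_coeff {i n k : ℕ} (h : 2 * i + n ≤ 2 * k + 1) :
    ((X : R[X]) ^ i * (1 + X) ^ n).coeff (k + 1) ≤ ((X : R[X]) ^ i * (1 + X) ^ n).coeff k := by
  simp only [coeff_X_pow_mul_one_add_X_pow]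
  rw [if_pos (by omega), if_pos (by omega), Nat.sub_add_comm (by omega)]
  exact Nat.mono_cast (Nat.choose_succ_le_choose_of_le_two_mul_add_one (by omega))

end Polynomial

theorem coeff_hPoly (a b k : ℕ) :
    (hPoly a b).coeff k = ∑ i ∈ range (min a b + 1),
      (((2 * i).choose i * a.choose i * b.choose i : ℕ) : ℤ) *
        ((X : ℤ[X]) ^ i * (1 + X) ^ (a + b + 1 - 2 * i)).coeff k := by
  simp only [hPoly, finsetSum_coeff, mul_assoc, coeff_C_mul]

theorem two_mul_le_of_mem_range_min_add_one {a b i : ℕ} (hi : i ∈ range (min a b + 1)) :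
    2 * i ≤ a + b := by
  have := mem_range.1 hi
  omega

theorem coeff_hPoly_le_coeff_succ {a b k : ℕ} (hk : 2 * k + 2 ≤ a + b + 1) :
    (hPoly a b).coeff k ≤ (hPoly a b).coeff (k + 1) := by
  rw [coeff_hPoly, coeff_hPoly]
  gcongr with i hi
  have := two_mul_le_of_mem_range_min_add_one hi
  exact coeff_X_pow_mul_one_add_X_pow_le_coeff_succ (by omega)

theorem coeff_hPoly_succ_le_coeff {a b k : ℕ} (hk : a + b + 1 ≤ 2 * k + 1) :
    (hPoly a b).coeff (k + 1) ≤ (hPoly a b).coeff k := by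
  rw [coeff_hPoly, coeff_hPoly]
  gcongr with i hi
  have := two_mul_le_of_mem_range_min_add_one hi
  exact coeff_X_pow_mul_one_add_X_pow_succ_le_coeff (by omega)

theorem stmt_19 (a b : ℕ) :
    ∃ m : ℕ, m ≤ a + b + 1 ∧
      (∀ k, k < m → (hPoly a b).coeff k ≤ (hPoly a b).coeff (k + 1)) ∧
      (∀ k, m ≤ k → k < a + b + 1 → (hPoly a b).coeff (k + 1) ≤ (hPoly a b).coeff k) := by
  refine ⟨(a + b + 1) / 2, Nat.div_le_self _ _, fun k hk => ?_, fun k hk _ => ?_⟩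
  · exact coeff_hPoly_le_coeff_succ (by omega)
  · exact coeff_hPoly_succ_le_coeff (by omega)
end
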